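/- arXiv:2004.14986 — 2 statements merged into one kernel-verified Lean document; each statement's English description precedes it below -/
import Mathlib

section
/- Let W, Z_1, Z_2, Z_3, Z_4, X be random variables with finite ranges on a common finite probability space. Assume: (independence) I(W ; (Z_1, Z_2, Z_3, Z_4)) = 0; (key entropies, from minimum key storage) H(Z_k) = H(W) for k = 1, 2, 3, 4, H(Z_1, Z_3) = 2·H(W), and H(Z_2, Z_4) = 2·H(W); (symmetry) H(Z_1, Z_2, Z_3) = H(Z_1, Z_2, Z_4); (correctness, with Receivers 1 and 3 qualified) H(W | (X, Z_1)) = 0 and H(W | (X, Z_3)) = 0; and (security, with Receivers 2 and 4 eavesdropping) I(W ; (X, Z_2)) = 0 and I(W ; (X, Z_4)) = 0. Then H(Z_1, Z_2, Z_3) ≥ 2.5 · H(W). -/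
open scoped BigOperators

/-- A finite probability space: a finite sample space `Ω` together with a
probability mass function `p`. -/
structure FinProbSpace : Type 1 where
  Ω : Type
  fin : Fintype Ω
  p : Ω → ℝ
  nonneg : ∀ ω, 0 ≤ p ω
  sum_one : Finset.sum fin.elems p = 1

namespace FinProbSpace

/-- Probability that the random variable `X` takes the value `s`. -/
noncomputable def prob (μ : FinProbSpace) {S : Type} [DecidableEq S]
    (X : μ.Ω → S) (s : S) : ℝ :=
  letI := μ.fin
  ∑ ω : μ.Ω, if X ω = s then μ.p ω else 0

/-- Shannon entropy of a random variable with finite range. -/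
noncomputable def H (μ : FinProbSpace) {S : Type} [Fintype S] [DecidableEq S]
    (X : μ.Ω → S) : ℝ :=
  ∑ s : S, Real.negMulLog (μ.prob X s)

/-- Conditional Shannon entropy `H(X | Y)`. -/
noncomputable def Hc (μ : FinProbSpace) {S T : Type} [Fintype S] [DecidableEq S]
    [Fintype T] [DecidableEq T] (X : μ.Ω → S) (Y : μ.Ω → T) : ℝ :=
  μ.H (fun ω => (X ω, Y ω)) - μ.H Y

/-- Mutual information `I(X ; Y)`. -/
noncomputable def MI (μ : FinProbSpace) {S T : Type} [Fintype S] [DecidableEq S]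
    [Fintype T] [DecidableEq T] (X : μ.Ω → S) (Y : μ.Ω → T) : ℝ :=
  μ.H X + μ.H Y - μ.H (fun ω => (X ω, Y ω))

/-- Conditional mutual information `I(X ; Y | Z)`. -/
noncomputable def CMI (μ : FinProbSpace) {S T U : Type} [Fintype S] [DecidableEq S]
    [Fintype T] [DecidableEq T] [Fintype U] [DecidableEq U]
    (X : μ.Ω → S) (Y : μ.Ω → T) (Z : μ.Ω → U) : ℝ :=
  μ.H (fun ω => (X ω, Z ω)) + μ.H (fun ω => (Y ω, Z ω))
    - μ.H (fun ω => (X ω, Y ω, Z ω)) - μ.H Z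

/-- Independence of two random variables: the joint pmf factorizes. -/
def IndepRV (μ : FinProbSpace) {S T : Type} [DecidableEq S] [DecidableEq T]
    (X : μ.Ω → S) (Y : μ.Ω → T) : Prop :=
  ∀ s t, μ.prob (fun ω => (X ω, Y ω)) (s, t) = μ.prob X s * μ.prob Y t

end FinProbSpace

open FinProbSpace


section AuxCore
open Real Finset

lemma negMulLog_sum_le {S T : Type} [Fintype S] [Fintype T] (a : S → T → ℝ)
    (ha : ∀ s t, 0 ≤ a s t) :
    ∑ t, Real.negMulLog (∑ s, a s t) ≤ ∑ s, ∑ t, Real.negMulLog (a s t) := by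
  rw [Finset.sum_comm]
  refine Finset.sum_le_sum fun t _ => ?_
  set b := ∑ s, a s t with hb
  have hbn : ∀ s, a s t ≤ b := fun s =>
    Finset.single_le_sum (fun s' _ => ha s' t) (Finset.mem_univ s)
  have h1 : Real.negMulLog b = ∑ s, (-(a s t) * Real.log b) := by
    rw [Real.negMulLog, ← Finset.sum_neg_distrib, ← Finset.sum_mul]
  rw [h1]
  refine Finset.sum_le_sum fun s _ => ?_
  rw [Real.negMulLog]
  rcases eq_or_lt_of_le (ha s t) with h0 | h0
  · simp [← h0]
  · have : Real.log (a s t) ≤ Real.log b := Real.log_le_log (by positivity) (hbn s)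
    nlinarith

private lemma sum_sum_mul_const {S T : Type} [Fintype S] [Fintype T]
    (f : S → T → ℝ) (L : ℝ) :
    ∑ s, ∑ t, (f s t * L) = (∑ s, ∑ t, f s t) * L := by
  rw [Finset.sum_mul]
  exact Finset.sum_congr rfl fun s _ => (Finset.sum_mul _ _ _).symm

private lemma sum_rot3 {S T U : Type} [Fintype S] [Fintype T] [Fintype U]
    (F : S → T → U → ℝ) :
    ∑ s, ∑ t, ∑ u, F s t u = ∑ u, ∑ s, ∑ t, F s t u := by
  calc ∑ s, ∑ t, ∑ u, F s t u = ∑ s, ∑ u, ∑ t, F s t u :=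
        Finset.sum_congr rfl fun s _ => Finset.sum_comm
    _ = ∑ u, ∑ s, ∑ t, F s t u := Finset.sum_comm

lemma negMulLog_submod_core {S T U : Type} [Fintype S] [Fintype T] [Fintype U]
    (a : S → T → U → ℝ) (ha : ∀ s t u, 0 ≤ a s t u) :
    (∑ s, ∑ t, ∑ u, Real.negMulLog (a s t u)) + ∑ u, Real.negMulLog (∑ s, ∑ t, a s t u)
      ≤ (∑ s, ∑ u, Real.negMulLog (∑ t, a s t u))
        + ∑ t, ∑ u, Real.negMulLog (∑ s, a s t u) := by
  classical
  have hb : ∀ s u, 0 ≤ ∑ t, a s t u := fun s u => Finset.sum_nonneg fun t _ => ha s t u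
  have hc : ∀ t u, 0 ≤ ∑ s, a s t u := fun t u => Finset.sum_nonneg fun s _ => ha s t u
  have hd : ∀ u, 0 ≤ ∑ s, ∑ t, a s t u := fun u => Finset.sum_nonneg fun s _ => hb s u
  have hab : ∀ s t u, a s t u ≤ ∑ t', a s t' u := fun s t u =>
    Finset.single_le_sum (fun t' _ => ha s t' u) (Finset.mem_univ t)
  have hac : ∀ s t u, a s t u ≤ ∑ s', a s' t u := fun s t u =>
    Finset.single_le_sum (fun s' _ => ha s' t u) (Finset.mem_univ s)
  have hbd : ∀ s u, (∑ t, a s t u) ≤ ∑ s', ∑ t, a s' t u := fun s u =>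
    Finset.single_le_sum (fun s' _ => hb s' u) (Finset.mem_univ s)
  set b : S → U → ℝ := fun s u => ∑ t, a s t u with hbdef
  set c : T → U → ℝ := fun t u => ∑ s, a s t u with hcdef
  set d : U → ℝ := fun u => ∑ s, ∑ t, a s t u with hddef
  -- pointwise key inequality
  have key : ∀ s t u, a s t u - b s u * c t u / d u ≤
      (-(a s t u) * Real.log (b s u)) + (-(a s t u) * Real.log (c t u))
      - Real.negMulLog (a s t u) - (-(a s t u) * Real.log (d u)) := by
    intro s t u
    rcases eq_or_lt_of_le (ha s t u) with h0 | h0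
    · have h1 : 0 ≤ b s u * c t u / d u :=
        div_nonneg (mul_nonneg (hb s u) (hc t u)) (hd u)
      simp only [← h0, Real.negMulLog_zero, neg_zero, zero_mul, zero_sub, sub_zero,
        add_zero, zero_add]
      linarith
    · have hbp : 0 < b s u := lt_of_lt_of_le h0 (hab s t u)
      have hcp : 0 < c t u := lt_of_lt_of_le h0 (hac s t u)
      have hdp : 0 < d u := lt_of_lt_of_le hbp (hbd s u)
      have hlog := Real.log_le_sub_one_of_pos
        (show 0 < b s u * c t u / (a s t u * d u) by positivity)
      have hexp : Real.log (b s u * c t u / (a s t u * d u))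
          = Real.log (b s u) + Real.log (c t u) - Real.log (a s t u) - Real.log (d u) := by
        rw [Real.log_div (by positivity) (by positivity), Real.log_mul (ne_of_gt hbp)
          (ne_of_gt hcp), Real.log_mul (ne_of_gt h0) (ne_of_gt hdp)]
        ring
      rw [hexp] at hlog
      have h2 := mul_le_mul_of_nonneg_left hlog (le_of_lt h0)
      have harith : a s t u * (b s u * c t u / (a s t u * d u) - 1)
          = b s u * c t u / d u - a s t u := by
        field_simp
      rw [harith, mul_sub, mul_sub, mul_add] at h2
      rw [Real.negMulLog]
      linarith
  -- total of the correction terms is zero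
  have h1 : ∀ u, ∑ s, ∑ t, (b s u * c t u / d u) = d u := by
    intro u
    have e0 : ∑ s, ∑ t, (b s u * c t u / d u) = (∑ s, b s u) * (∑ t, c t u) / d u := by
      rw [Finset.sum_mul, Finset.sum_div]
      refine Finset.sum_congr rfl fun s _ => ?_
      rw [Finset.mul_sum, Finset.sum_div]
    rw [e0]
    have hbsum : ∑ s, b s u = d u := rfl
    have hcsum : ∑ t, c t u = d u := Finset.sum_comm
    rw [hbsum, hcsum]
    rcases eq_or_lt_of_le (hd u) with h0 | h0
    · rw [show d u = (0:ℝ) from h0.symm]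
      simp
    · have hdne : d u ≠ 0 := ne_of_gt h0
      field_simp
  have hsum : ∑ s, ∑ t, ∑ u, (a s t u - b s u * c t u / d u) = 0 := by
    simp only [Finset.sum_sub_distrib]
    rw [sum_rot3 (fun s t u => b s u * c t u / d u), sum_rot3 a]
    rw [Finset.sum_congr rfl fun u (_ : u ∈ Finset.univ) => h1 u]
    exact sub_self _
  have main := Finset.sum_le_sum fun s (_ : s ∈ (Finset.univ : Finset S)) =>
    Finset.sum_le_sum fun t (_ : t ∈ (Finset.univ : Finset T)) =>
    Finset.sum_le_sum fun u (_ : u ∈ (Finset.univ : Finset U)) => key s t u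
  rw [hsum] at main
  simp only [Finset.sum_add_distrib, Finset.sum_sub_distrib] at main
  -- identify the log-sums with entropy sums
  have eb : ∑ s, ∑ t, ∑ u, (-(a s t u) * Real.log (b s u))
      = ∑ s, ∑ u, Real.negMulLog (b s u) := by
    refine Finset.sum_congr rfl fun s _ => ?_
    rw [Finset.sum_comm]
    refine Finset.sum_congr rfl fun u _ => ?_
    rw [Real.negMulLog, ← Finset.sum_neg_distrib, ← Finset.sum_mul]
  have ec : ∑ s, ∑ t, ∑ u, (-(a s t u) * Real.log (c t u))
      = ∑ t, ∑ u, Real.negMulLog (c t u) := by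
    rw [Finset.sum_comm]
    refine Finset.sum_congr rfl fun t _ => ?_
    rw [Finset.sum_comm]
    refine Finset.sum_congr rfl fun u _ => ?_
    rw [Real.negMulLog, ← Finset.sum_neg_distrib, ← Finset.sum_mul]
  have ed : ∑ s, ∑ t, ∑ u, (-(a s t u) * Real.log (d u))
      = ∑ u, Real.negMulLog (d u) := by
    rw [sum_rot3 (fun s t u => -(a s t u) * Real.log (d u))]
    refine Finset.sum_congr rfl fun u _ => ?_
    simp only [neg_mul, Finset.sum_neg_distrib]
    rw [sum_sum_mul_const (fun s t => a s t u) (Real.log (d u))]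
    rw [show (∑ s, ∑ t, a s t u) = d u from rfl, Real.negMulLog]
    ring
  rw [eb, ec, ed] at main
  have gb : ∑ s, ∑ u, Real.negMulLog (∑ t, a s t u) = ∑ s, ∑ u, Real.negMulLog (b s u) := rfl
  have gc : ∑ t, ∑ u, Real.negMulLog (∑ s, a s t u) = ∑ t, ∑ u, Real.negMulLog (c t u) := rfl
  have gd : ∑ u, Real.negMulLog (∑ s, ∑ t, a s t u) = ∑ u, Real.negMulLog (d u) := rfl
  rw [gb, gc, gd]
  linarith
private lemma sum_rot3' {S T U : Type} [Fintype S] [Fintype T] [Fintype U]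
    (F : S → T → U → ℝ) :
    ∑ s, ∑ t, ∑ u, F s t u = ∑ u, ∑ s, ∑ t, F s t u := by
  calc ∑ s, ∑ t, ∑ u, F s t u = ∑ s, ∑ u, ∑ t, F s t u :=
        Finset.sum_congr rfl fun s _ => Finset.sum_comm
    _ = ∑ u, ∑ s, ∑ t, F s t u := Finset.sum_comm


end AuxCore

namespace FinProbSpace
open Real Finset
variable (μ : FinProbSpace)


lemma prob_nonneg {S : Type} [DecidableEq S] (X : μ.Ω → S) (s : S) :
    0 ≤ μ.prob X s := by
  letI := μ.fin
  unfold prob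
  exact Finset.sum_nonneg fun ω _ => by split_ifs <;> simp [μ.nonneg ω]

lemma sum_univ_p : (letI := μ.fin; ∑ ω : μ.Ω, μ.p ω) = 1 := μ.sum_one

lemma prob_pair_snd {S T : Type} [DecidableEq S] [DecidableEq T] [Fintype S]
    (X : μ.Ω → S) (Y : μ.Ω → T) (t : T) :
    μ.prob Y t = ∑ s, μ.prob (fun ω => (X ω, Y ω)) (s, t) := by
  classical
  letI := μ.fin
  unfold prob
  rw [Finset.sum_comm]
  refine Finset.sum_congr rfl fun ω _ => ?_
  by_cases ht : Y ω = t <;> simp [Prod.ext_iff, ht]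

lemma prob_trip_t {S T U : Type} [DecidableEq S] [DecidableEq T] [DecidableEq U] [Fintype T]
    (X : μ.Ω → S) (Y : μ.Ω → T) (Z : μ.Ω → U) (s : S) (u : U) :
    μ.prob (fun ω => (X ω, Z ω)) (s, u)
      = ∑ t, μ.prob (fun ω => (X ω, Y ω, Z ω)) (s, t, u) := by
  classical
  letI := μ.fin
  unfold prob
  rw [Finset.sum_comm]
  refine Finset.sum_congr rfl fun ω _ => ?_
  by_cases hs : X ω = s <;> by_cases hu : Z ω = u <;> simp [Prod.ext_iff, hs, hu]

lemma prob_trip_s {S T U : Type} [DecidableEq S] [DecidableEq T] [DecidableEq U] [Fintype S]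
    (X : μ.Ω → S) (Y : μ.Ω → T) (Z : μ.Ω → U) (t : T) (u : U) :
    μ.prob (fun ω => (Y ω, Z ω)) (t, u)
      = ∑ s, μ.prob (fun ω => (X ω, Y ω, Z ω)) (s, t, u) := by
  classical
  letI := μ.fin
  unfold prob
  rw [Finset.sum_comm]
  refine Finset.sum_congr rfl fun ω _ => ?_
  by_cases ht : Y ω = t <;> by_cases hu : Z ω = u <;> simp [Prod.ext_iff, ht, hu]

lemma prob_trip_st {S T U : Type} [DecidableEq S] [DecidableEq T] [DecidableEq U]
    [Fintype S] [Fintype T]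
    (X : μ.Ω → S) (Y : μ.Ω → T) (Z : μ.Ω → U) (u : U) :
    μ.prob Z u = ∑ s, ∑ t, μ.prob (fun ω => (X ω, Y ω, Z ω)) (s, t, u) := by
  classical
  letI := μ.fin
  unfold prob
  rw [sum_rot3' (fun s t ω => if (X ω, Y ω, Z ω) = (s, t, u) then μ.p ω else 0)]
  refine Finset.sum_congr rfl fun ω _ => ?_
  by_cases hu : Z ω = u <;> simp [Prod.ext_iff, hu, ite_and, Finset.sum_ite_eq, Finset.sum_ite_eq']

lemma H_relabel {S T : Type} [Fintype S] [DecidableEq S] [Fintype T] [DecidableEq T]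
    (X : μ.Ω → S) (g : S → T) (hg : Function.Injective g) :
    μ.H (fun ω => g (X ω)) = μ.H X := by
  classical
  unfold H
  have hprob : ∀ s, μ.prob (fun ω => g (X ω)) (g s) = μ.prob X s := by
    intro s
    unfold prob
    exact Finset.sum_congr rfl fun ω _ => by simp [hg.eq_iff]
  have hzero : ∀ t, t ∉ Finset.univ.image g → μ.prob (fun ω => g (X ω)) t = 0 := by
    intro t ht
    unfold prob
    refine Finset.sum_eq_zero fun ω _ => ?_
    have : g (X ω) ≠ t := fun h => ht (Finset.mem_image.2 ⟨X ω, Finset.mem_univ _, h⟩)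
    simp [this]
  rw [← Finset.sum_subset (Finset.subset_univ (Finset.univ.image g))
    (fun t _ ht => by rw [hzero t ht, Real.negMulLog_zero])]
  rw [Finset.sum_image (fun s _ s' _ h => hg h)]
  exact Finset.sum_congr rfl fun s _ => by rw [hprob s]

lemma H_congr_inj {S T : Type} [Fintype S] [DecidableEq S] [Fintype T] [DecidableEq T]
    (X : μ.Ω → S) (Y : μ.Ω → T) (g : S → T) (hg : Function.Injective g)
    (h : ∀ ω, Y ω = g (X ω)) : μ.H Y = μ.H X := by
  rw [show Y = fun ω => g (X ω) from funext h]
  exact μ.H_relabel X g hg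

lemma H_unit : μ.H (fun _ : μ.Ω => ()) = 0 := by
  classical
  unfold H
  rw [Fintype.sum_unique]
  have : μ.prob (fun _ : μ.Ω => ()) () = 1 := by
    unfold prob
    simpa using μ.sum_univ_p
  rw [this, Real.negMulLog_one]

lemma H_snd_le {S T : Type} [Fintype S] [DecidableEq S] [Fintype T] [DecidableEq T]
    (X : μ.Ω → S) (Y : μ.Ω → T) :
    μ.H Y ≤ μ.H (fun ω => (X ω, Y ω)) := by
  classical
  have core := negMulLog_sum_le (fun s t => μ.prob (fun ω => (X ω, Y ω)) (s, t))
    (fun s t => μ.prob_nonneg _ _)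
  have e1 : μ.H Y = ∑ t, Real.negMulLog (∑ s, μ.prob (fun ω => (X ω, Y ω)) (s, t)) := by
    unfold H
    exact Finset.sum_congr rfl fun t _ => by rw [← μ.prob_pair_snd X Y t]
  have e2 : μ.H (fun ω => (X ω, Y ω))
      = ∑ s, ∑ t, Real.negMulLog (μ.prob (fun ω => (X ω, Y ω)) (s, t)) := by
    unfold H
    rw [Fintype.sum_prod_type]
  rw [e1, e2]
  exact core

lemma H_submod {S T U : Type} [Fintype S] [DecidableEq S] [Fintype T] [DecidableEq T]
    [Fintype U] [DecidableEq U] (X : μ.Ω → S) (Y : μ.Ω → T) (Z : μ.Ω → U) :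
    μ.H (fun ω => (X ω, Y ω, Z ω)) + μ.H Z
      ≤ μ.H (fun ω => (X ω, Z ω)) + μ.H (fun ω => (Y ω, Z ω)) := by
  classical
  have core := negMulLog_submod_core
    (fun s t u => μ.prob (fun ω => (X ω, Y ω, Z ω)) (s, t, u))
    (fun s t u => μ.prob_nonneg _ _)
  have e1 : μ.H (fun ω => (X ω, Y ω, Z ω))
      = ∑ s, ∑ t, ∑ u, Real.negMulLog (μ.prob (fun ω => (X ω, Y ω, Z ω)) (s, t, u)) := by
    unfold H
    rw [Fintype.sum_prod_type]
    exact Finset.sum_congr rfl fun s _ => by rw [Fintype.sum_prod_type]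
  have e2 : μ.H Z = ∑ u, Real.negMulLog
      (∑ s, ∑ t, μ.prob (fun ω => (X ω, Y ω, Z ω)) (s, t, u)) := by
    unfold H
    exact Finset.sum_congr rfl fun u _ => by rw [← μ.prob_trip_st X Y Z u]
  have e3 : μ.H (fun ω => (X ω, Z ω)) = ∑ s, ∑ u, Real.negMulLog
      (∑ t, μ.prob (fun ω => (X ω, Y ω, Z ω)) (s, t, u)) := by
    unfold H
    rw [Fintype.sum_prod_type]
    refine Finset.sum_congr rfl fun s _ => Finset.sum_congr rfl fun u _ => ?_
    rw [← μ.prob_trip_t X Y Z s u]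
  have e4 : μ.H (fun ω => (Y ω, Z ω)) = ∑ t, ∑ u, Real.negMulLog
      (∑ s, μ.prob (fun ω => (X ω, Y ω, Z ω)) (s, t, u)) := by
    unfold H
    rw [Fintype.sum_prod_type]
    refine Finset.sum_congr rfl fun t _ => Finset.sum_congr rfl fun u _ => ?_
    rw [← μ.prob_trip_s X Y Z t u]
  rw [e1, e2, e3, e4]
  exact core

lemma H_subadd {S T : Type} [Fintype S] [DecidableEq S] [Fintype T] [DecidableEq T]
    (X : μ.Ω → S) (Y : μ.Ω → T) :
    μ.H (fun ω => (X ω, Y ω)) ≤ μ.H X + μ.H Y := by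
  classical
  have h := μ.H_submod X Y (fun _ => ())
  have e1 : μ.H (fun ω => (X ω, Y ω, ())) = μ.H (fun ω => (X ω, Y ω)) :=
    μ.H_congr_inj _ _ (fun q => (q.1, q.2, ()))
      (fun a b hab => by
        rcases a with ⟨a1, a2⟩; rcases b with ⟨b1, b2⟩
        simp only [Prod.mk.injEq] at hab ⊢; tauto)
      (fun ω => rfl)
  have e2 : μ.H (fun ω => (X ω, ())) = μ.H X :=
    μ.H_congr_inj _ _ (fun q => (q, ()))
      (fun a b hab => by simp only [Prod.mk.injEq] at hab; exact hab.1)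
      (fun ω => rfl)
  have e3 : μ.H (fun ω => (Y ω, ())) = μ.H Y :=
    μ.H_congr_inj _ _ (fun q => (q, ()))
      (fun a b hab => by simp only [Prod.mk.injEq] at hab; exact hab.1)
      (fun ω => rfl)
  have e4 := μ.H_unit
  linarith

end FinProbSpace

set_option maxRecDepth 8000 in
/-- **Core converse step for Theorem 4** (via submodularity of entropy): with
`W` independent of `(Z_1, Z_2, Z_3, Z_4)`, all keys of full entropy
`H(Z_k) = H(W)`, pairwise independence `H(Z_1,Z_3) = H(Z_2,Z_4) = 2·H(W)`,
symmetry `H(Z_1,Z_2,Z_3) = H(Z_1,Z_2,Z_4)`, correctness for receivers 1, 3 and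
security against receivers 2, 4 for the signal `X`, the joint key size
satisfies `H(Z_1,Z_2,Z_3) ≥ 2.5·H(W)`. -/
theorem joint_key_size_bound
    (μ : FinProbSpace) {SW SZ1 SZ2 SZ3 SZ4 SX : Type}
    [Fintype SW] [DecidableEq SW] [Fintype SZ1] [DecidableEq SZ1]
    [Fintype SZ2] [DecidableEq SZ2] [Fintype SZ3] [DecidableEq SZ3]
    [Fintype SZ4] [DecidableEq SZ4] [Fintype SX] [DecidableEq SX]
    (W : μ.Ω → SW) (Z1 : μ.Ω → SZ1) (Z2 : μ.Ω → SZ2) (Z3 : μ.Ω → SZ3)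
    (Z4 : μ.Ω → SZ4) (X : μ.Ω → SX)
    (hInd : μ.MI W (fun ω => (Z1 ω, Z2 ω, Z3 ω, Z4 ω)) = 0)
    (hZ1 : μ.H Z1 = μ.H W) (hZ2 : μ.H Z2 = μ.H W)
    (hZ3 : μ.H Z3 = μ.H W) (hZ4 : μ.H Z4 = μ.H W)
    (hZ13 : μ.H (fun ω => (Z1 ω, Z3 ω)) = 2 * μ.H W)
    (hZ24 : μ.H (fun ω => (Z2 ω, Z4 ω)) = 2 * μ.H W)
    (hSym : μ.H (fun ω => (Z1 ω, Z2 ω, Z3 ω)) = μ.H (fun ω => (Z1 ω, Z2 ω, Z4 ω)))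
    (hCorr1 : μ.Hc W (fun ω => (X ω, Z1 ω)) = 0)
    (hCorr3 : μ.Hc W (fun ω => (X ω, Z3 ω)) = 0)
    (hSec2 : μ.MI W (fun ω => (X ω, Z2 ω)) = 0)
    (hSec4 : μ.MI W (fun ω => (X ω, Z4 ω)) = 0) :
    μ.H (fun ω => (Z1 ω, Z2 ω, Z3 ω)) ≥ 2.5 * μ.H W := by
  have e0 : μ.H (fun ω => (W ω, Z2 ω, X ω)) = μ.H (fun ω => (W ω, X ω, Z2 ω)) :=
    μ.H_congr_inj _ _ (fun q => (q.1, q.2.2, q.2.1)) (by rintro ⟨x0, x1, x2⟩ ⟨y0, y1, y2⟩ hab; simp only [Prod.mk.injEq] at hab ⊢; tauto) (fun ω => rfl)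
  have e1 : μ.H (fun ω => (Z2 ω, X ω)) = μ.H (fun ω => (X ω, Z2 ω)) :=
    μ.H_congr_inj _ _ (fun q => (q.2, q.1)) (by rintro ⟨x0, x1⟩ ⟨y0, y1⟩ hab; simp only [Prod.mk.injEq] at hab ⊢; tauto) (fun ω => rfl)
  have e2 : μ.H (fun ω => (W ω, Z2 ω, X ω, Z1 ω, Z3 ω)) = μ.H (fun ω => (W ω, X ω, Z1 ω, Z2 ω, Z3 ω)) :=
    μ.H_congr_inj _ _ (fun q => (q.1, q.2.2.2.1, q.2.1, q.2.2.1, q.2.2.2.2)) (by rintro ⟨x0, x1, x2, x3, x4⟩ ⟨y0, y1, y2, y3, y4⟩ hab; simp only [Prod.mk.injEq] at hab ⊢; tauto) (fun ω => rfl)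
  have e3 : μ.H (fun ω => (Z2 ω, X ω, Z1 ω, Z3 ω)) = μ.H (fun ω => (X ω, Z1 ω, Z2 ω, Z3 ω)) :=
    μ.H_congr_inj _ _ (fun q => (q.2.2.1, q.1, q.2.1, q.2.2.2)) (by rintro ⟨x0, x1, x2, x3⟩ ⟨y0, y1, y2, y3⟩ hab; simp only [Prod.mk.injEq] at hab ⊢; tauto) (fun ω => rfl)
  have e4 : μ.H (fun ω => (W ω, Z2 ω, X ω, Z1 ω, Z4 ω)) = μ.H (fun ω => (W ω, X ω, Z1 ω, Z2 ω, Z4 ω)) :=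
    μ.H_congr_inj _ _ (fun q => (q.1, q.2.2.2.1, q.2.1, q.2.2.1, q.2.2.2.2)) (by rintro ⟨x0, x1, x2, x3, x4⟩ ⟨y0, y1, y2, y3, y4⟩ hab; simp only [Prod.mk.injEq] at hab ⊢; tauto) (fun ω => rfl)
  have e5 : μ.H (fun ω => (Z2 ω, X ω, Z1 ω, Z4 ω)) = μ.H (fun ω => (X ω, Z1 ω, Z2 ω, Z4 ω)) :=
    μ.H_congr_inj _ _ (fun q => (q.2.2.1, q.1, q.2.1, q.2.2.2)) (by rintro ⟨x0, x1, x2, x3⟩ ⟨y0, y1, y2, y3⟩ hab; simp only [Prod.mk.injEq] at hab ⊢; tauto) (fun ω => rfl)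
  have e6 : μ.H (fun ω => (W ω, Z4 ω, X ω, Z1 ω)) = μ.H (fun ω => (W ω, X ω, Z1 ω, Z4 ω)) :=
    μ.H_congr_inj _ _ (fun q => (q.1, q.2.2.2, q.2.1, q.2.2.1)) (by rintro ⟨x0, x1, x2, x3⟩ ⟨y0, y1, y2, y3⟩ hab; simp only [Prod.mk.injEq] at hab ⊢; tauto) (fun ω => rfl)
  have e7 : μ.H (fun ω => (Z4 ω, X ω, Z1 ω)) = μ.H (fun ω => (X ω, Z1 ω, Z4 ω)) :=
    μ.H_congr_inj _ _ (fun q => (q.2.2, q.1, q.2.1)) (by rintro ⟨x0, x1, x2⟩ ⟨y0, y1, y2⟩ hab; simp only [Prod.mk.injEq] at hab ⊢; tauto) (fun ω => rfl)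
  have e8 : μ.H (fun ω => (X ω, Z2 ω, Z1 ω, Z3 ω)) = μ.H (fun ω => (X ω, Z1 ω, Z2 ω, Z3 ω)) :=
    μ.H_congr_inj _ _ (fun q => (q.1, q.2.2.1, q.2.1, q.2.2.2)) (by rintro ⟨x0, x1, x2, x3⟩ ⟨y0, y1, y2, y3⟩ hab; simp only [Prod.mk.injEq] at hab ⊢; tauto) (fun ω => rfl)
  have e9 : μ.H (fun ω => (Z2 ω, Z1 ω, Z3 ω)) = μ.H (fun ω => (Z1 ω, Z2 ω, Z3 ω)) :=
    μ.H_congr_inj _ _ (fun q => (q.2.1, q.1, q.2.2)) (by rintro ⟨x0, x1, x2⟩ ⟨y0, y1, y2⟩ hab; simp only [Prod.mk.injEq] at hab ⊢; tauto) (fun ω => rfl)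
  have e10 : μ.H (fun ω => (Z1 ω, Z2 ω, W ω, X ω, Z4 ω)) = μ.H (fun ω => (W ω, X ω, Z1 ω, Z2 ω, Z4 ω)) :=
    μ.H_congr_inj _ _ (fun q => (q.2.2.1, q.2.2.2.1, q.1, q.2.1, q.2.2.2.2)) (by rintro ⟨x0, x1, x2, x3, x4⟩ ⟨y0, y1, y2, y3, y4⟩ hab; simp only [Prod.mk.injEq] at hab ⊢; tauto) (fun ω => rfl)
  have e11 : μ.H (fun ω => (Z1 ω, W ω, X ω, Z4 ω)) = μ.H (fun ω => (W ω, X ω, Z1 ω, Z4 ω)) :=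
    μ.H_congr_inj _ _ (fun q => (q.2.2.1, q.1, q.2.1, q.2.2.2)) (by rintro ⟨x0, x1, x2, x3⟩ ⟨y0, y1, y2, y3⟩ hab; simp only [Prod.mk.injEq] at hab ⊢; tauto) (fun ω => rfl)
  have e12 : μ.H (fun ω => (Z2 ω, W ω, X ω, Z4 ω)) = μ.H (fun ω => (W ω, X ω, Z2 ω, Z4 ω)) :=
    μ.H_congr_inj _ _ (fun q => (q.2.2.1, q.1, q.2.1, q.2.2.2)) (by rintro ⟨x0, x1, x2, x3⟩ ⟨y0, y1, y2, y3⟩ hab; simp only [Prod.mk.injEq] at hab ⊢; tauto) (fun ω => rfl)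
  have e13 : μ.H (fun ω => (Z1 ω, Z3 ω, W ω, X ω)) = μ.H (fun ω => (W ω, X ω, Z1 ω, Z3 ω)) :=
    μ.H_congr_inj _ _ (fun q => (q.2.2.1, q.2.2.2, q.1, q.2.1)) (by rintro ⟨x0, x1, x2, x3⟩ ⟨y0, y1, y2, y3⟩ hab; simp only [Prod.mk.injEq] at hab ⊢; tauto) (fun ω => rfl)
  have e14 : μ.H (fun ω => (Z1 ω, W ω, X ω)) = μ.H (fun ω => (W ω, X ω, Z1 ω)) :=
    μ.H_congr_inj _ _ (fun q => (q.2.2, q.1, q.2.1)) (by rintro ⟨x0, x1, x2⟩ ⟨y0, y1, y2⟩ hab; simp only [Prod.mk.injEq] at hab ⊢; tauto) (fun ω => rfl)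
  have e15 : μ.H (fun ω => (Z3 ω, W ω, X ω)) = μ.H (fun ω => (W ω, X ω, Z3 ω)) :=
    μ.H_congr_inj _ _ (fun q => (q.2.2, q.1, q.2.1)) (by rintro ⟨x0, x1, x2⟩ ⟨y0, y1, y2⟩ hab; simp only [Prod.mk.injEq] at hab ⊢; tauto) (fun ω => rfl)
  have e16 : μ.H (fun ω => (Z1 ω, Z3 ω, W ω, X ω, Z2 ω, Z4 ω)) = μ.H (fun ω => (W ω, X ω, Z1 ω, Z2 ω, Z3 ω, Z4 ω)) :=
    μ.H_congr_inj _ _ (fun q => (q.2.2.1, q.2.2.2.2.1, q.1, q.2.1, q.2.2.2.1, q.2.2.2.2.2)) (by rintro ⟨x0, x1, x2, x3, x4, x5⟩ ⟨y0, y1, y2, y3, y4, y5⟩ hab; simp only [Prod.mk.injEq] at hab ⊢; tauto) (fun ω => rfl)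
  have e17 : μ.H (fun ω => (Z1 ω, W ω, X ω, Z2 ω, Z4 ω)) = μ.H (fun ω => (W ω, X ω, Z1 ω, Z2 ω, Z4 ω)) :=
    μ.H_congr_inj _ _ (fun q => (q.2.2.1, q.1, q.2.1, q.2.2.2.1, q.2.2.2.2)) (by rintro ⟨x0, x1, x2, x3, x4⟩ ⟨y0, y1, y2, y3, y4⟩ hab; simp only [Prod.mk.injEq] at hab ⊢; tauto) (fun ω => rfl)
  have e18 : μ.H (fun ω => (Z3 ω, W ω, X ω, Z2 ω, Z4 ω)) = μ.H (fun ω => (W ω, X ω, Z2 ω, Z3 ω, Z4 ω)) :=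
    μ.H_congr_inj _ _ (fun q => (q.2.2.2.1, q.1, q.2.1, q.2.2.1, q.2.2.2.2)) (by rintro ⟨x0, x1, x2, x3, x4⟩ ⟨y0, y1, y2, y3, y4⟩ hab; simp only [Prod.mk.injEq] at hab ⊢; tauto) (fun ω => rfl)
  have e19 : μ.H (fun ω => (Z1 ω, Z4 ω, W ω, X ω, Z2 ω, Z3 ω)) = μ.H (fun ω => (W ω, X ω, Z1 ω, Z2 ω, Z3 ω, Z4 ω)) :=
    μ.H_congr_inj _ _ (fun q => (q.2.2.1, q.2.2.2.2.2, q.1, q.2.1, q.2.2.2.1, q.2.2.2.2.1)) (by rintro ⟨x0, x1, x2, x3, x4, x5⟩ ⟨y0, y1, y2, y3, y4, y5⟩ hab; simp only [Prod.mk.injEq] at hab ⊢; tauto) (fun ω => rfl)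
  have e20 : μ.H (fun ω => (Z1 ω, W ω, X ω, Z2 ω, Z3 ω)) = μ.H (fun ω => (W ω, X ω, Z1 ω, Z2 ω, Z3 ω)) :=
    μ.H_congr_inj _ _ (fun q => (q.2.2.1, q.1, q.2.1, q.2.2.2.1, q.2.2.2.2)) (by rintro ⟨x0, x1, x2, x3, x4⟩ ⟨y0, y1, y2, y3, y4⟩ hab; simp only [Prod.mk.injEq] at hab ⊢; tauto) (fun ω => rfl)
  have e21 : μ.H (fun ω => (Z4 ω, W ω, X ω, Z2 ω, Z3 ω)) = μ.H (fun ω => (W ω, X ω, Z2 ω, Z3 ω, Z4 ω)) :=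
    μ.H_congr_inj _ _ (fun q => (q.2.2.2.2, q.1, q.2.1, q.2.2.1, q.2.2.2.1)) (by rintro ⟨x0, x1, x2, x3, x4⟩ ⟨y0, y1, y2, y3, y4⟩ hab; simp only [Prod.mk.injEq] at hab ⊢; tauto) (fun ω => rfl)
  have e22 : μ.H (fun ω => (Z2 ω, Z3 ω, W ω, X ω, Z1 ω, Z4 ω)) = μ.H (fun ω => (W ω, X ω, Z1 ω, Z2 ω, Z3 ω, Z4 ω)) :=
    μ.H_congr_inj _ _ (fun q => (q.2.2.2.1, q.2.2.2.2.1, q.1, q.2.1, q.2.2.1, q.2.2.2.2.2)) (by rintro ⟨x0, x1, x2, x3, x4, x5⟩ ⟨y0, y1, y2, y3, y4, y5⟩ hab; simp only [Prod.mk.injEq] at hab ⊢; tauto) (fun ω => rfl)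
  have e23 : μ.H (fun ω => (Z2 ω, W ω, X ω, Z1 ω, Z4 ω)) = μ.H (fun ω => (W ω, X ω, Z1 ω, Z2 ω, Z4 ω)) :=
    μ.H_congr_inj _ _ (fun q => (q.2.2.2.1, q.1, q.2.1, q.2.2.1, q.2.2.2.2)) (by rintro ⟨x0, x1, x2, x3, x4⟩ ⟨y0, y1, y2, y3, y4⟩ hab; simp only [Prod.mk.injEq] at hab ⊢; tauto) (fun ω => rfl)
  have e24 : μ.H (fun ω => (Z3 ω, W ω, X ω, Z1 ω, Z4 ω)) = μ.H (fun ω => (W ω, X ω, Z1 ω, Z3 ω, Z4 ω)) :=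
    μ.H_congr_inj _ _ (fun q => (q.2.2.2.1, q.1, q.2.1, q.2.2.1, q.2.2.2.2)) (by rintro ⟨x0, x1, x2, x3, x4⟩ ⟨y0, y1, y2, y3, y4⟩ hab; simp only [Prod.mk.injEq] at hab ⊢; tauto) (fun ω => rfl)
  have e25 : μ.H (fun ω => (Z2 ω, Z4 ω, X ω)) = μ.H (fun ω => (X ω, Z2 ω, Z4 ω)) :=
    μ.H_congr_inj _ _ (fun q => (q.2.1, q.2.2, q.1)) (by rintro ⟨x0, x1, x2⟩ ⟨y0, y1, y2⟩ hab; simp only [Prod.mk.injEq] at hab ⊢; tauto) (fun ω => rfl)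
  have e26 : μ.H (fun ω => (Z4 ω, X ω)) = μ.H (fun ω => (X ω, Z4 ω)) :=
    μ.H_congr_inj _ _ (fun q => (q.2, q.1)) (by rintro ⟨x0, x1⟩ ⟨y0, y1⟩ hab; simp only [Prod.mk.injEq] at hab ⊢; tauto) (fun ω => rfl)
  have e27 : μ.H (fun ω => (Z3 ω, Z4 ω, W ω, X ω, Z2 ω)) = μ.H (fun ω => (W ω, X ω, Z2 ω, Z3 ω, Z4 ω)) :=
    μ.H_congr_inj _ _ (fun q => (q.2.2.2.1, q.2.2.2.2, q.1, q.2.1, q.2.2.1)) (by rintro ⟨x0, x1, x2, x3, x4⟩ ⟨y0, y1, y2, y3, y4⟩ hab; simp only [Prod.mk.injEq] at hab ⊢; tauto) (fun ω => rfl)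
  have e28 : μ.H (fun ω => (Z3 ω, W ω, X ω, Z2 ω)) = μ.H (fun ω => (W ω, X ω, Z2 ω, Z3 ω)) :=
    μ.H_congr_inj _ _ (fun q => (q.2.2.2, q.1, q.2.1, q.2.2.1)) (by rintro ⟨x0, x1, x2, x3⟩ ⟨y0, y1, y2, y3⟩ hab; simp only [Prod.mk.injEq] at hab ⊢; tauto) (fun ω => rfl)
  have e29 : μ.H (fun ω => (Z4 ω, W ω, X ω, Z2 ω)) = μ.H (fun ω => (W ω, X ω, Z2 ω, Z4 ω)) :=
    μ.H_congr_inj _ _ (fun q => (q.2.2.2, q.1, q.2.1, q.2.2.1)) (by rintro ⟨x0, x1, x2, x3⟩ ⟨y0, y1, y2, y3⟩ hab; simp only [Prod.mk.injEq] at hab ⊢; tauto) (fun ω => rfl)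
  have e30 : μ.H (fun ω => (Z1 ω, W ω, X ω, Z2 ω, Z3 ω, Z4 ω)) = μ.H (fun ω => (W ω, X ω, Z1 ω, Z2 ω, Z3 ω, Z4 ω)) :=
    μ.H_congr_inj _ _ (fun q => (q.2.2.1, q.1, q.2.1, q.2.2.2.1, q.2.2.2.2.1, q.2.2.2.2.2)) (by rintro ⟨x0, x1, x2, x3, x4, x5⟩ ⟨y0, y1, y2, y3, y4, y5⟩ hab; simp only [Prod.mk.injEq] at hab ⊢; tauto) (fun ω => rfl)
  have e31 : μ.H (fun ω => (Z2 ω, W ω, X ω, Z1 ω, Z3 ω, Z4 ω)) = μ.H (fun ω => (W ω, X ω, Z1 ω, Z2 ω, Z3 ω, Z4 ω)) :=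
    μ.H_congr_inj _ _ (fun q => (q.2.2.2.1, q.1, q.2.1, q.2.2.1, q.2.2.2.2.1, q.2.2.2.2.2)) (by rintro ⟨x0, x1, x2, x3, x4, x5⟩ ⟨y0, y1, y2, y3, y4, y5⟩ hab; simp only [Prod.mk.injEq] at hab ⊢; tauto) (fun ω => rfl)
  have e32 : μ.H (fun ω => (Z3 ω, W ω, X ω, Z1 ω, Z2 ω, Z4 ω)) = μ.H (fun ω => (W ω, X ω, Z1 ω, Z2 ω, Z3 ω, Z4 ω)) :=
    μ.H_congr_inj _ _ (fun q => (q.2.2.2.2.1, q.1, q.2.1, q.2.2.1, q.2.2.2.1, q.2.2.2.2.2)) (by rintro ⟨x0, x1, x2, x3, x4, x5⟩ ⟨y0, y1, y2, y3, y4, y5⟩ hab; simp only [Prod.mk.injEq] at hab ⊢; tauto) (fun ω => rfl)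
  have i1 : μ.H (fun ω => (W ω, Z2 ω, X ω)) + μ.H X ≤ μ.H (fun ω => (W ω, X ω)) + μ.H (fun ω => (Z2 ω, X ω)) :=
    μ.H_submod W Z2 X
  have i2 : μ.H (fun ω => (W ω, Z2 ω, X ω, Z1 ω, Z3 ω)) + μ.H (fun ω => (X ω, Z1 ω, Z3 ω)) ≤ μ.H (fun ω => (W ω, X ω, Z1 ω, Z3 ω)) + μ.H (fun ω => (Z2 ω, X ω, Z1 ω, Z3 ω)) :=
    μ.H_submod W Z2 (fun ω => (X ω, Z1 ω, Z3 ω))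
  have i3 : μ.H (fun ω => (W ω, Z2 ω, X ω, Z1 ω, Z4 ω)) + μ.H (fun ω => (X ω, Z1 ω, Z4 ω)) ≤ μ.H (fun ω => (W ω, X ω, Z1 ω, Z4 ω)) + μ.H (fun ω => (Z2 ω, X ω, Z1 ω, Z4 ω)) :=
    μ.H_submod W Z2 (fun ω => (X ω, Z1 ω, Z4 ω))
  have i4 : μ.H (fun ω => (W ω, Z4 ω, X ω, Z1 ω)) + μ.H (fun ω => (X ω, Z1 ω)) ≤ μ.H (fun ω => (W ω, X ω, Z1 ω)) + μ.H (fun ω => (Z4 ω, X ω, Z1 ω)) :=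
    μ.H_submod W Z4 (fun ω => (X ω, Z1 ω))
  have i5 : μ.H (fun ω => (X ω, Z1 ω)) ≤ μ.H X + μ.H Z1 := μ.H_subadd X Z1
  have i6 : μ.H (fun ω => (X ω, Z1 ω, Z2 ω, Z4 ω)) + μ.H (fun ω => (Z2 ω, Z4 ω)) ≤ μ.H (fun ω => (X ω, Z2 ω, Z4 ω)) + μ.H (fun ω => (Z1 ω, Z2 ω, Z4 ω)) :=
    μ.H_submod X Z1 (fun ω => (Z2 ω, Z4 ω))
  have i7 : μ.H (fun ω => (X ω, Z2 ω, Z1 ω, Z3 ω)) + μ.H (fun ω => (Z1 ω, Z3 ω)) ≤ μ.H (fun ω => (X ω, Z1 ω, Z3 ω)) + μ.H (fun ω => (Z2 ω, Z1 ω, Z3 ω)) :=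
    μ.H_submod X Z2 (fun ω => (Z1 ω, Z3 ω))
  have i8 : μ.H (fun ω => (X ω, Z3 ω)) ≤ μ.H X + μ.H Z3 := μ.H_subadd X Z3
  have i9 : μ.H (fun ω => (Z1 ω, Z2 ω, W ω, X ω, Z4 ω)) + μ.H (fun ω => (W ω, X ω, Z4 ω)) ≤ μ.H (fun ω => (Z1 ω, W ω, X ω, Z4 ω)) + μ.H (fun ω => (Z2 ω, W ω, X ω, Z4 ω)) :=
    μ.H_submod Z1 Z2 (fun ω => (W ω, X ω, Z4 ω))
  have i10 : μ.H (fun ω => (Z1 ω, Z3 ω, W ω, X ω)) + μ.H (fun ω => (W ω, X ω)) ≤ μ.H (fun ω => (Z1 ω, W ω, X ω)) + μ.H (fun ω => (Z3 ω, W ω, X ω)) :=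
    μ.H_submod Z1 Z3 (fun ω => (W ω, X ω))
  have i11 : μ.H (fun ω => (Z1 ω, Z3 ω, W ω, X ω, Z2 ω, Z4 ω)) + μ.H (fun ω => (W ω, X ω, Z2 ω, Z4 ω)) ≤ μ.H (fun ω => (Z1 ω, W ω, X ω, Z2 ω, Z4 ω)) + μ.H (fun ω => (Z3 ω, W ω, X ω, Z2 ω, Z4 ω)) :=
    μ.H_submod Z1 Z3 (fun ω => (W ω, X ω, Z2 ω, Z4 ω))
  have i12 : μ.H (fun ω => (Z1 ω, Z4 ω, W ω, X ω, Z2 ω, Z3 ω)) + μ.H (fun ω => (W ω, X ω, Z2 ω, Z3 ω)) ≤ μ.H (fun ω => (Z1 ω, W ω, X ω, Z2 ω, Z3 ω)) + μ.H (fun ω => (Z4 ω, W ω, X ω, Z2 ω, Z3 ω)) :=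
    μ.H_submod Z1 Z4 (fun ω => (W ω, X ω, Z2 ω, Z3 ω))
  have i13 : μ.H (fun ω => (Z2 ω, Z3 ω, W ω, X ω, Z1 ω, Z4 ω)) + μ.H (fun ω => (W ω, X ω, Z1 ω, Z4 ω)) ≤ μ.H (fun ω => (Z2 ω, W ω, X ω, Z1 ω, Z4 ω)) + μ.H (fun ω => (Z3 ω, W ω, X ω, Z1 ω, Z4 ω)) :=
    μ.H_submod Z2 Z3 (fun ω => (W ω, X ω, Z1 ω, Z4 ω))
  have i14 : μ.H (fun ω => (Z2 ω, Z4 ω, X ω)) + μ.H X ≤ μ.H (fun ω => (Z2 ω, X ω)) + μ.H (fun ω => (Z4 ω, X ω)) :=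
    μ.H_submod Z2 Z4 X
  have i15 : μ.H (fun ω => (Z3 ω, Z4 ω, W ω, X ω, Z2 ω)) + μ.H (fun ω => (W ω, X ω, Z2 ω)) ≤ μ.H (fun ω => (Z3 ω, W ω, X ω, Z2 ω)) + μ.H (fun ω => (Z4 ω, W ω, X ω, Z2 ω)) :=
    μ.H_submod Z3 Z4 (fun ω => (W ω, X ω, Z2 ω))
  have m16 : μ.H (fun ω => (W ω, X ω, Z2 ω, Z3 ω, Z4 ω)) ≤ μ.H (fun ω => (Z1 ω, W ω, X ω, Z2 ω, Z3 ω, Z4 ω)) := μ.H_snd_le Z1 (fun ω => (W ω, X ω, Z2 ω, Z3 ω, Z4 ω))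
  have m17 : μ.H (fun ω => (W ω, X ω, Z1 ω, Z3 ω, Z4 ω)) ≤ μ.H (fun ω => (Z2 ω, W ω, X ω, Z1 ω, Z3 ω, Z4 ω)) := μ.H_snd_le Z2 (fun ω => (W ω, X ω, Z1 ω, Z3 ω, Z4 ω))
  have m18 : μ.H (fun ω => (W ω, X ω, Z1 ω, Z2 ω, Z4 ω)) ≤ μ.H (fun ω => (Z3 ω, W ω, X ω, Z1 ω, Z2 ω, Z4 ω)) := μ.H_snd_le Z3 (fun ω => (W ω, X ω, Z1 ω, Z2 ω, Z4 ω))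
  have hc1 : μ.H (fun ω => (W ω, X ω, Z1 ω)) - μ.H (fun ω => (X ω, Z1 ω)) = 0 := hCorr1
  have hc3 : μ.H (fun ω => (W ω, X ω, Z3 ω)) - μ.H (fun ω => (X ω, Z3 ω)) = 0 := hCorr3
  have hs2 : μ.H W + μ.H (fun ω => (X ω, Z2 ω)) - μ.H (fun ω => (W ω, X ω, Z2 ω)) = 0 := hSec2
  have hs4 : μ.H W + μ.H (fun ω => (X ω, Z4 ω)) - μ.H (fun ω => (W ω, X ω, Z4 ω)) = 0 := hSec4
  linarith [i1, i2, i3, i4, i5, i6, i7, i8, i9, i10, i11, i12, i13, i14, i15, m16, m17, m18, e0, e1, e2, e3, e4, e5, e6, e7, e8, e9, e10, e11, e12, e13, e14, e15, e16, e17, e18, e19, e20, e21, e22, e23, e24, e25, e26, e27, e28, e29, e30, e31, e32, hc1, hc3, hs2, hs4, hZ1, hZ2, hZ3, hZ4, hZ13, hZ24, hSym]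
end

section
/- For every prime power p there exist a finite probability space and random variables on it: s_1, …, s_5 i.i.d. uniform on F_p; a message W = (W_1, W_2) uniform on F_p^2 independent of (s_1, …, s_5); keys Z_1 = (s_1, s_2), Z_2 = (s_3, s_4), Z_3 = (s_5, s_1 + s_3), Z_4 = (s_2 + s_4, s_1 + s_2 + s_5); and for every 2-element subset Q ⊆ {1, 2, 3, 4} a signal X_Q taking values in F_p^4 that is a deterministic function of (W, s_1, …, s_5); such that for every such Q: H(W | (X_Q, Z_q)) = 0 for every q ∈ Q, and I(W ; (X_Q, Z_e)) = 0 for every e ∈ {1, 2, 3, 4} \ Q. In particular H(W) = 2, H(Z_k) = 2 for each k, H(X_Q) ≤ 4, and H(Z_1, Z_2, Z_3, Z_4) = 5 (entropies in p-ary units), so the scheme achieves key storage α = 1, broadcast bandwidth β = 2, and normalized joint key size 2.5. -/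
open scoped BigOperators

open FinProbSpace


set_option linter.unusedSectionVars false
set_option maxHeartbeats 1000000

section Lemmas

/-- sum of probabilities is one -/
lemma sum_prob_eq_one (μ : FinProbSpace) {S : Type} [Fintype S] [DecidableEq S]
    (X : μ.Ω → S) : ∑ x : S, μ.prob X x = 1 := by
  letI := μ.fin
  unfold FinProbSpace.prob
  rw [Finset.sum_comm]
  have : ∀ ω : μ.Ω, (∑ x : S, if X ω = x then μ.p ω else 0) = μ.p ω := by
    intro ω; simp
  simp only [this]
  exact μ.sum_one

lemma prob_nonneg (μ : FinProbSpace) {S : Type} [DecidableEq S]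
    (X : μ.Ω → S) (x : S) : 0 ≤ μ.prob X x := by
  letI := μ.fin
  unfold FinProbSpace.prob
  apply Finset.sum_nonneg
  intro ω _
  split <;> simp [μ.nonneg]

/-- entropy of an independent pair -/
lemma H_pair_of_indep (μ : FinProbSpace) {S T : Type} [Fintype S] [DecidableEq S]
    [Fintype T] [DecidableEq T] (X : μ.Ω → S) (Y : μ.Ω → T)
    (h : μ.IndepRV X Y) : μ.H (fun ω => (X ω, Y ω)) = μ.H X + μ.H Y := by
  unfold FinProbSpace.H
  rw [Fintype.sum_prod_type]
  have : ∀ x : S, ∀ y : T, Real.negMulLog (μ.prob (fun ω => (X ω, Y ω)) (x, y))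
      = μ.prob Y y * Real.negMulLog (μ.prob X x) + μ.prob X x * Real.negMulLog (μ.prob Y y) := by
    intro x y; rw [h x y, Real.negMulLog_mul]
  simp only [this, Finset.sum_add_distrib, ← Finset.sum_mul, ← Finset.mul_sum]
  rw [sum_prob_eq_one, sum_prob_eq_one]
  ring

lemma MI_eq_zero (μ : FinProbSpace) {S T : Type} [Fintype S] [DecidableEq S]
    [Fintype T] [DecidableEq T] (X : μ.Ω → S) (Y : μ.Ω → T)
    (h : μ.IndepRV X Y) : μ.MI X Y = 0 := by
  unfold FinProbSpace.MI
  rw [H_pair_of_indep μ X Y h]; ring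

/-- if X is a function of Y then H(X|Y)=0 -/
lemma Hc_eq_zero (μ : FinProbSpace) {S T : Type} [Fintype S] [DecidableEq S]
    [Fintype T] [DecidableEq T] (X : μ.Ω → S) (Y : μ.Ω → T)
    (f : T → S) (hf : ∀ ω, X ω = f (Y ω)) : μ.Hc X Y = 0 := by
  letI := μ.fin
  have hprob : ∀ x y, μ.prob (fun ω => (X ω, Y ω)) (x, y)
      = if x = f y then μ.prob Y y else 0 := by
    intro x y
    unfold FinProbSpace.prob
    split
    · rename_i hxy
      apply Finset.sum_congr rfl
      intro ω _
      congr 1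
      simp only [Prod.mk.injEq, eq_iff_iff]
      constructor
      · rintro ⟨-, h2⟩; exact h2
      · intro h2; exact ⟨by rw [hf ω, h2, hxy], h2⟩
    · rename_i hxy
      apply Finset.sum_eq_zero
      intro ω _
      have : ¬ ((X ω, Y ω) = (x, y)) := by
        rintro ⟨rfl, rfl⟩
        exact hxy (hf ω)
      simp [this]
  have hH : μ.H (fun ω => (X ω, Y ω)) = μ.H Y := by
    unfold FinProbSpace.H
    rw [Fintype.sum_prod_type, Finset.sum_comm]
    apply Finset.sum_congr rfl
    intro y _
    have : ∀ x : S, Real.negMulLog (μ.prob (fun ω => (X ω, Y ω)) (x, y))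
        = if x = f y then Real.negMulLog (μ.prob Y y) else 0 := by
      intro x
      rw [hprob x y]
      split <;> simp
    simp only [this]
    rw [Finset.sum_ite_eq' Finset.univ (f y) (fun _ => Real.negMulLog (μ.prob Y y))]
    simp
  unfold FinProbSpace.Hc
  rw [hH]; ring

end Lemmas

section Uniform

variable (F : Type) [Field F] [Fintype F] [DecidableEq F]

abbrev Om := (F × F) × (Fin 5 → F)

noncomputable def US : FinProbSpace where
  Ω := Om F
  fin := inferInstance
  p := fun _ => ((Fintype.card (Om F) : ℝ))⁻¹
  nonneg := fun _ => by positivity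
  sum_one := by
    have h : (0:ℝ) < (Fintype.card (Om F) : ℝ) := by
      exact_mod_cast Fintype.card_pos
    show ∑ _ω : Om F, ((Fintype.card (Om F) : ℝ))⁻¹ = 1
    rw [Finset.sum_const, Finset.card_univ, nsmul_eq_mul, mul_inv_cancel₀ (ne_of_gt h)]

variable {F}

lemma US_prob_of_equiv {S B : Type} [Fintype S] [DecidableEq S] [Fintype B]
    (v : Om F ≃ S × B) (X : Om F → S) (hX : ∀ ω, X ω = (v ω).1) (x : S) :
    (US F).prob X x = ((Fintype.card S : ℝ))⁻¹ := by
  have hB : (0:ℝ) < (Fintype.card B : ℝ) := by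
    have : Nonempty B := by
      have : Nonempty (S × B) := Nonempty.map v (by infer_instance)
      exact this.elim fun p => ⟨p.2⟩
    exact_mod_cast Fintype.card_pos
  have hS : (0:ℝ) < (Fintype.card S : ℝ) := by
    have : Nonempty S := ⟨x⟩
    exact_mod_cast Fintype.card_pos
  have hcard : (Fintype.card (Om F) : ℝ) = (Fintype.card S : ℝ) * (Fintype.card B : ℝ) := by
    rw [Fintype.card_congr v, Fintype.card_prod]; push_cast; ring
  show (∑ ω : Om F, if X ω = x then ((Fintype.card (Om F) : ℝ))⁻¹ else 0) = _
  rw [Fintype.sum_equiv v (fun ω : Om F => if X ω = x then ((Fintype.card (Om F) : ℝ))⁻¹ else 0)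
    (fun q : S × B => if q.1 = x then ((Fintype.card (Om F) : ℝ))⁻¹ else 0)
    (fun ω => by simp only [hX ω])]
  rw [Fintype.sum_prod_type]
  have : ∀ a : S, (∑ _b : B, if a = x then ((Fintype.card (Om F) : ℝ))⁻¹ else 0)
      = if a = x then (Fintype.card B : ℝ) * ((Fintype.card (Om F) : ℝ))⁻¹ else 0 := by
    intro a; split <;> simp [Finset.sum_const, Finset.card_univ, mul_comm]
  simp only [this]
  rw [Finset.sum_ite_eq' Finset.univ x
    (fun _ => (Fintype.card B : ℝ) * ((Fintype.card (Om F) : ℝ))⁻¹)]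
  simp only [Finset.mem_univ, if_true]
  rw [hcard]
  field_simp

lemma US_H_of_equiv {S B : Type} [Fintype S] [DecidableEq S] [Fintype B]
    (v : Om F ≃ S × B) (X : Om F → S) (hX : ∀ ω, X ω = (v ω).1) :
    (US F).H X = Real.log (Fintype.card S) := by
  have hS : (0:ℝ) < (Fintype.card S : ℝ) := by
    have : Nonempty (S × B) := Nonempty.map v (by infer_instance)
    have : Nonempty S := this.elim fun p => ⟨p.1⟩
    exact_mod_cast Fintype.card_pos
  unfold FinProbSpace.H
  have : ∀ x : S, (US F).prob X x = ((Fintype.card S : ℝ))⁻¹ :=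
    US_prob_of_equiv v X hX
  simp only [this]
  rw [Finset.sum_const, Finset.card_univ, nsmul_eq_mul]
  unfold Real.negMulLog
  rw [Real.log_inv]
  field_simp

/-- entropy is unchanged under an injective post-composition -/
lemma H_comp_inj (μ : FinProbSpace) {S T : Type} [Fintype S] [DecidableEq S]
    [Fintype T] [DecidableEq T] (X : μ.Ω → S) (g : S → T) (hg : Function.Injective g) :
    μ.H (fun ω => g (X ω)) = μ.H X := by
  letI := μ.fin
  have h1 : ∀ x : S, μ.prob (fun ω => g (X ω)) (g x) = μ.prob X x := by
    intro x
    unfold FinProbSpace.prob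
    apply Finset.sum_congr rfl
    intro ω _
    congr 1
    simp [hg.eq_iff]
  have h2 : ∀ t : T, t ∉ Finset.univ.image g → μ.prob (fun ω => g (X ω)) t = 0 := by
    intro t ht
    unfold FinProbSpace.prob
    apply Finset.sum_eq_zero
    intro ω _
    have : g (X ω) ≠ t := by
      intro h
      exact ht (Finset.mem_image.mpr ⟨X ω, Finset.mem_univ _, h⟩)
    simp [this]
  unfold FinProbSpace.H
  rw [← Finset.sum_subset (Finset.subset_univ (Finset.univ.image g))
      (fun t _ ht => by rw [h2 t ht, Real.negMulLog_zero])]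
  rw [Finset.sum_image (fun a _ b _ h => hg h)]
  apply Finset.sum_congr rfl
  intro x _
  rw [h1]

/-- the independence trick: anything of the form g (c ω.1 + ω.2) is independent of ω.1 -/
lemma US_indep {T : Type} [DecidableEq T] [Fintype T]
    (g : (Fin 5 → F) → T) (c : F × F → (Fin 5 → F)) :
    (US F).IndepRV Prod.fst (fun ω => g (c ω.1 + ω.2)) := by
  intro a t
  set κ : ℝ := ((Fintype.card (Om F) : ℝ))⁻¹ with hκ
  set N : ℝ := ∑ b : Fin 5 → F, (if g b = t then κ else 0) with hN
  have htrans : ∀ a' : F × F,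
      (∑ b : Fin 5 → F, (if g (c a' + b) = t then κ else 0)) = N := by
    intro a'
    rw [hN, ← Equiv.sum_comp (Equiv.addLeft (c a'))
      (fun b => if g b = t then κ else 0)]
    rfl
  have hjoint : (US F).prob (fun ω => (ω.1, g (c ω.1 + ω.2))) (a, t) = N := by
    show (∑ ω : Om F, if (ω.1, g (c ω.1 + ω.2)) = (a, t) then κ else 0) = N
    rw [Fintype.sum_prod_type]
    have : ∀ a' : F × F, ∀ b : Fin 5 → F,
        (if ((a' , g (c a' + b)) = (a, t)) then κ else 0)
        = if a' = a then (if g (c a' + b) = t then κ else 0) else 0 := by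
      intro a' b
      by_cases h1 : a' = a <;> by_cases h2 : g (c a' + b) = t <;>
        simp [Prod.ext_iff, h1, h2]
    simp only [this]
    have hpull : ∀ a' : F × F,
        (∑ b : Fin 5 → F, if a' = a then (if g (c a' + b) = t then κ else 0) else 0)
        = if a' = a then (∑ b : Fin 5 → F, if g (c a' + b) = t then κ else 0) else 0 := by
      intro a'; split <;> simp
    simp only [hpull]
    rw [Finset.sum_ite_eq' Finset.univ a
      (fun a' => ∑ b : Fin 5 → F, (if g (c a' + b) = t then κ else 0))]
    simp [htrans a]
  have hfst : (US F).prob (Prod.fst : Om F → F × F) a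
      = (Fintype.card (Fin 5 → F) : ℝ) * κ := by
    show (∑ ω : Om F, if ω.1 = a then κ else 0) = _
    rw [Fintype.sum_prod_type]
    have : ∀ a' : F × F, (∑ _b : Fin 5 → F, if a' = a then κ else 0)
        = if a' = a then (Fintype.card (Fin 5 → F) : ℝ) * κ else 0 := by
      intro a'; split <;> simp [Finset.sum_const, Finset.card_univ, mul_comm]
    simp only [this]
    rw [Finset.sum_ite_eq' Finset.univ a (fun _ => (Fintype.card (Fin 5 → F) : ℝ) * κ)]
    simp
  have hsnd : (US F).prob (fun ω => g (c ω.1 + ω.2)) t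
      = (Fintype.card (F × F) : ℝ) * N := by
    show (∑ ω : Om F, if g (c ω.1 + ω.2) = t then κ else 0) = _
    rw [Fintype.sum_prod_type]
    simp only [htrans]
    simp [Finset.sum_const, Finset.card_univ, nsmul_eq_mul]
  have hcard : (Fintype.card (Om F) : ℝ)
      = (Fintype.card (F × F) : ℝ) * (Fintype.card (Fin 5 → F) : ℝ) := by
    have h := Fintype.card_prod (F × F) (Fin 5 → F)
    rw [show Fintype.card (Om F) = Fintype.card (F × F) * Fintype.card (Fin 5 → F) from h]
    push_cast; ring
  have h1 : (0:ℝ) < (Fintype.card (F × F) : ℝ) := by exact_mod_cast Fintype.card_pos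
  have h2 : (0:ℝ) < (Fintype.card (Fin 5 → F) : ℝ) := by exact_mod_cast Fintype.card_pos
  clear_value κ N
  rw [hjoint, hfst, hsnd, hκ, hcard]
  field_simp


variable (F)

def x01 : Om F → Fin 4 → F := fun ω =>
  ![ω.1.1 + (-1 : F) * ω.2 0 + (-1 : F) * ω.2 1, ω.1.2 + (-1 : F) * ω.2 0, ω.1.1 + (1 : F) * ω.2 2 + (1 : F) * ω.2 3, ω.1.2 + (1 : F) * ω.2 2]

def eX01 : Om F ≃ (Fin 4 → F) × (F × F × F) where
  toFun ω := (x01 F ω, (ω.2 2, ω.2 3, ω.2 4))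
  invFun q := (((1 : F) * q.1 2 + (-1 : F) * q.2.1 + (-1 : F) * q.2.2.1, (1 : F) * q.1 3 + (-1 : F) * q.2.1),
    ![(-1 : F) * q.1 1 + (1 : F) * q.1 3 + (-1 : F) * q.2.1, (-1 : F) * q.1 0 + (1 : F) * q.1 1 + (1 : F) * q.1 2 + (-1 : F) * q.1 3 + (-1 : F) * q.2.2.1, (1 : F) * q.2.1, (1 : F) * q.2.2.1, (1 : F) * q.2.2.2])
  left_inv ω := by
    obtain ⟨⟨w1, w2⟩, sv⟩ := ω
    refine Prod.ext (Prod.ext ?_ ?_) (funext fun i => ?_)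
    · (simp [x01]; try ring)
    · (simp [x01]; try ring)
    · fin_cases i <;> (simp [x01]; try ring)
  right_inv q := by
    obtain ⟨x, y1, y2, y3⟩ := q
    refine Prod.ext (funext fun k => ?_) (Prod.ext ?_ (Prod.ext ?_ ?_))
    · fin_cases k <;> (simp [x01]; try ring)
    · (simp [x01]; try ring)
    · (simp [x01]; try ring)
    · (simp [x01]; try ring)


def x02 : Om F → Fin 4 → F := fun ω =>
  ![ω.1.1 + (-1 : F) * ω.2 0 + (-1 : F) * ω.2 1, ω.1.2 + (-1 : F) * ω.2 0, ω.1.1 + (1 : F) * ω.2 4, ω.1.2 + (-1 : F) * ω.2 0 + (-1 : F) * ω.2 2]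

def eX02 : Om F ≃ (Fin 4 → F) × (F × F × F) where
  toFun ω := (x02 F ω, (ω.2 1, ω.2 3, ω.2 4))
  invFun q := (((1 : F) * q.1 2 + (-1 : F) * q.2.2.2, (-1 : F) * q.1 0 + (1 : F) * q.1 1 + (1 : F) * q.1 2 + (-1 : F) * q.2.1 + (-1 : F) * q.2.2.2),
    ![(-1 : F) * q.1 0 + (1 : F) * q.1 2 + (-1 : F) * q.2.1 + (-1 : F) * q.2.2.2, (1 : F) * q.2.1, (1 : F) * q.1 1 + (-1 : F) * q.1 3, (1 : F) * q.2.2.1, (1 : F) * q.2.2.2])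
  left_inv ω := by
    obtain ⟨⟨w1, w2⟩, sv⟩ := ω
    refine Prod.ext (Prod.ext ?_ ?_) (funext fun i => ?_)
    · (simp [x02]; try ring)
    · (simp [x02]; try ring)
    · fin_cases i <;> (simp [x02]; try ring)
  right_inv q := by
    obtain ⟨x, y1, y2, y3⟩ := q
    refine Prod.ext (funext fun k => ?_) (Prod.ext ?_ (Prod.ext ?_ ?_))
    · fin_cases k <;> (simp [x02]; try ring)
    · (simp [x02]; try ring)
    · (simp [x02]; try ring)
    · (simp [x02]; try ring)


def x03 : Om F → Fin 4 → F := fun ω =>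
  ![ω.1.1 + (-1 : F) * ω.2 0 + (-1 : F) * ω.2 1, ω.1.2 + (-1 : F) * ω.2 0, ω.1.1 + (-1 : F) * ω.2 0 + (-1 : F) * ω.2 1 + (-1 : F) * ω.2 4, ω.1.2 + (-1 : F) * ω.2 0 + (1 : F) * ω.2 3 + (-1 : F) * ω.2 4]

def eX03 : Om F ≃ (Fin 4 → F) × (F × F × F) where
  toFun ω := (x03 F ω, (ω.2 0, ω.2 1, ω.2 2))
  invFun q := (((1 : F) * q.1 0 + (1 : F) * q.2.1 + (1 : F) * q.2.2.1, (1 : F) * q.1 1 + (1 : F) * q.2.1),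
    ![(1 : F) * q.2.1, (1 : F) * q.2.2.1, (1 : F) * q.2.2.2, (1 : F) * q.1 0 + (-1 : F) * q.1 1 + (-1 : F) * q.1 2 + (1 : F) * q.1 3, (1 : F) * q.1 0 + (-1 : F) * q.1 2])
  left_inv ω := by
    obtain ⟨⟨w1, w2⟩, sv⟩ := ω
    refine Prod.ext (Prod.ext ?_ ?_) (funext fun i => ?_)
    · (simp [x03]; try ring)
    · (simp [x03]; try ring)
    · fin_cases i <;> (simp [x03]; try ring)
  right_inv q := by
    obtain ⟨x, y1, y2, y3⟩ := q
    refine Prod.ext (funext fun k => ?_) (Prod.ext ?_ (Prod.ext ?_ ?_))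
    · fin_cases k <;> (simp [x03]; try ring)
    · (simp [x03]; try ring)
    · (simp [x03]; try ring)
    · (simp [x03]; try ring)


def x12 : Om F → Fin 4 → F := fun ω =>
  ![ω.1.1 + (-1 : F) * ω.2 2 + (-1 : F) * ω.2 3, ω.1.2 + (-1 : F) * ω.2 2, ω.1.1 + (-1 : F) * ω.2 0 + (-1 : F) * ω.2 2 + (-1 : F) * ω.2 4, ω.1.2 + (-1 : F) * ω.2 0 + (-1 : F) * ω.2 2]

def eX12 : Om F ≃ (Fin 4 → F) × (F × F × F) where
  toFun ω := (x12 F ω, (ω.2 1, ω.2 2, ω.2 4))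
  invFun q := (((1 : F) * q.1 1 + (1 : F) * q.1 2 + (-1 : F) * q.1 3 + (1 : F) * q.2.2.1 + (1 : F) * q.2.2.2, (1 : F) * q.1 1 + (1 : F) * q.2.2.1),
    ![(1 : F) * q.1 1 + (-1 : F) * q.1 3, (1 : F) * q.2.1, (1 : F) * q.2.2.1, (-1 : F) * q.1 0 + (1 : F) * q.1 1 + (1 : F) * q.1 2 + (-1 : F) * q.1 3 + (1 : F) * q.2.2.2, (1 : F) * q.2.2.2])
  left_inv ω := by
    obtain ⟨⟨w1, w2⟩, sv⟩ := ω
    refine Prod.ext (Prod.ext ?_ ?_) (funext fun i => ?_)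
    · (simp [x12]; try ring)
    · (simp [x12]; try ring)
    · fin_cases i <;> (simp [x12]; try ring)
  right_inv q := by
    obtain ⟨x, y1, y2, y3⟩ := q
    refine Prod.ext (funext fun k => ?_) (Prod.ext ?_ (Prod.ext ?_ ?_))
    · fin_cases k <;> (simp [x12]; try ring)
    · (simp [x12]; try ring)
    · (simp [x12]; try ring)
    · (simp [x12]; try ring)


def x13 : Om F → Fin 4 → F := fun ω =>
  ![ω.1.1 + (-1 : F) * ω.2 2 + (-1 : F) * ω.2 3, ω.1.2 + (-1 : F) * ω.2 2, ω.1.1 + (1 : F) * ω.2 0 + (-1 : F) * ω.2 3 + (1 : F) * ω.2 4, ω.1.2 + (1 : F) * ω.2 0 + (1 : F) * ω.2 1 + (1 : F) * ω.2 4]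

def eX13 : Om F ≃ (Fin 4 → F) × (F × F × F) where
  toFun ω := (x13 F ω, (ω.2 2, ω.2 3, ω.2 4))
  invFun q := (((1 : F) * q.1 0 + (1 : F) * q.2.1 + (1 : F) * q.2.2.1, (1 : F) * q.1 1 + (1 : F) * q.2.1),
    ![(-1 : F) * q.1 0 + (1 : F) * q.1 2 + (-1 : F) * q.2.1 + (-1 : F) * q.2.2.2, (1 : F) * q.1 0 + (-1 : F) * q.1 1 + (-1 : F) * q.1 2 + (1 : F) * q.1 3, (1 : F) * q.2.1, (1 : F) * q.2.2.1, (1 : F) * q.2.2.2])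
  left_inv ω := by
    obtain ⟨⟨w1, w2⟩, sv⟩ := ω
    refine Prod.ext (Prod.ext ?_ ?_) (funext fun i => ?_)
    · (simp [x13]; try ring)
    · (simp [x13]; try ring)
    · fin_cases i <;> (simp [x13]; try ring)
  right_inv q := by
    obtain ⟨x, y1, y2, y3⟩ := q
    refine Prod.ext (funext fun k => ?_) (Prod.ext ?_ (Prod.ext ?_ ?_))
    · fin_cases k <;> (simp [x13]; try ring)
    · (simp [x13]; try ring)
    · (simp [x13]; try ring)
    · (simp [x13]; try ring)


def x23 : Om F → Fin 4 → F := fun ω =>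
  ![ω.1.1 + (-1 : F) * ω.2 0 + (-1 : F) * ω.2 2 + (-1 : F) * ω.2 4, ω.1.2 + (-1 : F) * ω.2 4, ω.1.1 + (-1 : F) * ω.2 0 + (1 : F) * ω.2 3 + (-1 : F) * ω.2 4, ω.1.2 + (-1 : F) * ω.2 0 + (-1 : F) * ω.2 1 + (-1 : F) * ω.2 4]

def eX23 : Om F ≃ (Fin 4 → F) × (F × F × F) where
  toFun ω := (x23 F ω, (ω.2 1, ω.2 3, ω.2 4))
  invFun q := (((1 : F) * q.1 1 + (1 : F) * q.1 2 + (-1 : F) * q.1 3 + (-1 : F) * q.2.1 + (-1 : F) * q.2.2.1 + (1 : F) * q.2.2.2, (1 : F) * q.1 1 + (1 : F) * q.2.2.2),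
    ![(1 : F) * q.1 1 + (-1 : F) * q.1 3 + (-1 : F) * q.2.1, (1 : F) * q.2.1, (-1 : F) * q.1 0 + (1 : F) * q.1 2 + (-1 : F) * q.2.2.1, (1 : F) * q.2.2.1, (1 : F) * q.2.2.2])
  left_inv ω := by
    obtain ⟨⟨w1, w2⟩, sv⟩ := ω
    refine Prod.ext (Prod.ext ?_ ?_) (funext fun i => ?_)
    · (simp [x23]; try ring)
    · (simp [x23]; try ring)
    · fin_cases i <;> (simp [x23]; try ring)
  right_inv q := by
    obtain ⟨x, y1, y2, y3⟩ := q
    refine Prod.ext (funext fun k => ?_) (Prod.ext ?_ (Prod.ext ?_ ?_))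
    · fin_cases k <;> (simp [x23]; try ring)
    · (simp [x23]; try ring)
    · (simp [x23]; try ring)
    · (simp [x23]; try ring)


def Zf : Fin 4 → Om F → F × F :=
  ![fun ω => (ω.2 0, ω.2 1), fun ω => (ω.2 2, ω.2 3),
    fun ω => (ω.2 4, ω.2 0 + ω.2 2), fun ω => (ω.2 1 + ω.2 3, ω.2 0 + ω.2 1 + ω.2 4)]

def eZ0 : Om F ≃ (F × F) × ((F × F) × (F × F × F)) where
  toFun ω := ((ω.2 0, ω.2 1), (ω.1, (ω.2 2, ω.2 3, ω.2 4)))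
  invFun q := (q.2.1, ![q.1.1, q.1.2, q.2.2.1, q.2.2.2.1, q.2.2.2.2])
  left_inv ω := by
    obtain ⟨⟨w1, w2⟩, sv⟩ := ω
    refine Prod.ext rfl (funext fun i => ?_)
    fin_cases i <;> rfl
  right_inv q := rfl

def eZ1 : Om F ≃ (F × F) × ((F × F) × (F × F × F)) where
  toFun ω := ((ω.2 2, ω.2 3), (ω.1, (ω.2 0, ω.2 1, ω.2 4)))
  invFun q := (q.2.1, ![q.2.2.1, q.2.2.2.1, q.1.1, q.1.2, q.2.2.2.2])
  left_inv ω := by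
    obtain ⟨⟨w1, w2⟩, sv⟩ := ω
    refine Prod.ext rfl (funext fun i => ?_)
    fin_cases i <;> rfl
  right_inv q := rfl

def eZ2 : Om F ≃ (F × F) × ((F × F) × (F × F × F)) where
  toFun ω := ((ω.2 4, ω.2 0 + ω.2 2), (ω.1, (ω.2 0, ω.2 1, ω.2 3)))
  invFun q := (q.2.1, ![q.2.2.1, q.2.2.2.1, q.1.2 - q.2.2.1, q.2.2.2.2, q.1.1])
  left_inv ω := by
    obtain ⟨⟨w1, w2⟩, sv⟩ := ω
    refine Prod.ext rfl (funext fun i => ?_)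
    fin_cases i <;> (simp; try ring)
  right_inv q := by
    obtain ⟨⟨a, b⟩, w, x, y, z⟩ := q
    refine Prod.ext (Prod.ext ?_ ?_) rfl <;> (simp; try ring)

def eZ3 : Om F ≃ (F × F) × ((F × F) × (F × F × F)) where
  toFun ω := ((ω.2 1 + ω.2 3, ω.2 0 + ω.2 1 + ω.2 4), (ω.1, (ω.2 0, ω.2 1, ω.2 2)))
  invFun q := (q.2.1, ![q.2.2.1, q.2.2.2.1, q.2.2.2.2,
    q.1.1 - q.2.2.2.1, q.1.2 - q.2.2.1 - q.2.2.2.1])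
  left_inv ω := by
    obtain ⟨⟨w1, w2⟩, sv⟩ := ω
    refine Prod.ext rfl (funext fun i => ?_)
    fin_cases i <;> (simp; try ring)
  right_inv q := by
    obtain ⟨⟨a, b⟩, w, x, y, z⟩ := q
    refine Prod.ext (Prod.ext ?_ ?_) rfl <;> (simp; try ring)

def gz : (Fin 5 → F) → (Fin 4 → F × F) := fun s =>
  ![(s 0, s 1), (s 2, s 3), (s 4, s 0 + s 2), (s 1 + s 3, s 0 + s 1 + s 4)]

lemma gz_inj : Function.Injective (gz F) := by
  intro a b h
  have h0 := congrFun h 0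
  have h1 := congrFun h 1
  have h2 := congrFun h 2
  simp [gz, Prod.ext_iff] at h0 h1 h2
  funext i
  fin_cases i
  · exact h0.1
  · exact h0.2
  · exact h1.1
  · exact h1.2
  · exact h2.1

def Xf : Finset (Fin 4) → Om F → Fin 4 → F := fun Q =>
  if Q = ({0,1} : Finset (Fin 4)) then x01 F else
  if Q = ({0,2} : Finset (Fin 4)) then x02 F else
  if Q = ({0,3} : Finset (Fin 4)) then x03 F else
  if Q = ({1,2} : Finset (Fin 4)) then x12 F else
  if Q = ({1,3} : Finset (Fin 4)) then x13 F else
  x23 F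

lemma log_card_FF : Real.log ((Fintype.card (F × F) : ℕ) : ℝ) = 2 * Real.log (Fintype.card F) := by
  rw [Fintype.card_prod]
  push_cast
  rw [show ((Fintype.card F : ℝ) * (Fintype.card F : ℝ)) = (Fintype.card F : ℝ) ^ 2 by ring,
    Real.log_pow]
  norm_num

lemma log_card_fun5 : Real.log ((Fintype.card (Fin 5 → F) : ℕ) : ℝ) = 5 * Real.log (Fintype.card F) := by
  rw [Fintype.card_fun]
  simp [Real.log_pow]

lemma log_card_fun4 : Real.log ((Fintype.card (Fin 4 → F) : ℕ) : ℝ) = 4 * Real.log (Fintype.card F) := by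
  rw [Fintype.card_fun]
  simp [Real.log_pow]



end Uniform

/-- **Minimum joint key size 2.5 at (N, K, α, β) = (2, 4, 1, 2), achievability.**
For every finite field `F` (of any prime power order `p`) there are a finite
probability space, i.i.d. uniform `s_1, …, s_5` on `F`, a message
`W = (W_1, W_2)` uniform on `F^2` independent of `(s_1, …, s_5)`, keys
`Z_1 = (s_1, s_2)`, `Z_2 = (s_3, s_4)`, `Z_3 = (s_5, s_1 + s_3)`,
`Z_4 = (s_2 + s_4, s_1 + s_2 + s_5)`, and for every 2-element subset
`Q ⊆ {1,2,3,4}` a signal `X_Q ∈ F^4` that is a deterministic function of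
`(W, s_1, …, s_5)`, satisfying correctness and security; moreover (entropies
in p-ary units, i.e. after dividing by `log p`): `H(W) = 2`, `H(Z_k) = 2`,
`H(X_Q) ≤ 4`, and `H(Z_1, Z_2, Z_3, Z_4) = 5`, so α = 1, β = 2 and normalized
joint key size 2.5 are achieved. -/
theorem achievability_joint_key_size_N2_K4
    (F : Type) [Field F] [Fintype F] [DecidableEq F] :
    ∃ (μ : FinProbSpace) (s : Fin 5 → μ.Ω → F) (W : μ.Ω → F × F)
      (Z : Fin 4 → μ.Ω → F × F) (X : Finset (Fin 4) → μ.Ω → (Fin 4 → F)),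
      (∀ x : Fin 5 → F, μ.prob (fun ω => fun i : Fin 5 => s i ω) x
          = 1 / (Fintype.card F : ℝ) ^ 5)
      ∧ (∀ w : F × F, μ.prob W w = 1 / (Fintype.card F : ℝ) ^ 2)
      ∧ μ.IndepRV W (fun ω => fun i : Fin 5 => s i ω)
      ∧ (∀ ω, Z 0 ω = (s 0 ω, s 1 ω))
      ∧ (∀ ω, Z 1 ω = (s 2 ω, s 3 ω))
      ∧ (∀ ω, Z 2 ω = (s 4 ω, s 0 ω + s 2 ω))
      ∧ (∀ ω, Z 3 ω = (s 1 ω + s 3 ω, s 0 ω + s 1 ω + s 4 ω))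
      ∧ (∀ Q : Finset (Fin 4), Q.card = 2 →
          (∃ f : (F × F) × (Fin 5 → F) → (Fin 4 → F),
            ∀ ω, X Q ω = f (W ω, fun i : Fin 5 => s i ω))
          ∧ (∀ q ∈ Q, μ.Hc W (fun ω => (X Q ω, Z q ω)) = 0)
          ∧ (∀ e ∉ Q, μ.MI W (fun ω => (X Q ω, Z e ω)) = 0))
      ∧ μ.H W = 2 * Real.log (Fintype.card F)
      ∧ (∀ k : Fin 4, μ.H (Z k) = 2 * Real.log (Fintype.card F))
      ∧ (∀ Q : Finset (Fin 4), Q.card = 2 →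
          μ.H (X Q) ≤ 4 * Real.log (Fintype.card F))
      ∧ μ.H (fun ω => fun k : Fin 4 => Z k ω) = 5 * Real.log (Fintype.card F) := by

  classical
  refine ⟨US F, fun i ω => ω.2 i, Prod.fst, Zf F, Xf F,
    ?_, ?_, ?_, fun ω => rfl, fun ω => rfl, fun ω => rfl, fun ω => rfl, ?_, ?_, ?_, ?_, ?_⟩
  · -- prob of s-vector
    intro x
    have h := US_prob_of_equiv (Equiv.prodComm (F × F) (Fin 5 → F))
      (fun ω : Om F => fun i : Fin 5 => ω.2 i) (fun ω => rfl) x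
    rw [Fintype.card_fun, Fintype.card_fin] at h
    rw [show (1 : ℝ) / (Fintype.card F : ℝ) ^ 5 = ((Fintype.card F : ℝ) ^ 5)⁻¹ from one_div _]
    rw [show ((Fintype.card F : ℝ) ^ 5) = ((Fintype.card F ^ 5 : ℕ) : ℝ) by push_cast; ring]
    exact h
  · -- prob of W
    intro w
    have h := US_prob_of_equiv (Equiv.refl (Om F)) (Prod.fst : Om F → F × F)
      (fun ω => rfl) w
    rw [Fintype.card_prod] at h
    rw [show (1 : ℝ) / (Fintype.card F : ℝ) ^ 2 = ((Fintype.card F : ℝ) ^ 2)⁻¹ from one_div _]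
    rw [show ((Fintype.card F : ℝ) ^ 2) = ((Fintype.card F * Fintype.card F : ℕ) : ℝ) by push_cast; ring]
    exact h
  · -- independence of W and s
    show (US F).IndepRV Prod.fst (fun ω : Om F => fun i : Fin 5 => ω.2 i)
    have h : (fun ω : Om F => fun i : Fin 5 => ω.2 i)
        = (fun ω : Om F => (id : (Fin 5 → F) → (Fin 5 → F))
            ((fun _ : F × F => (0 : Fin 5 → F)) ω.1 + ω.2)) := by
      funext ω; simp
    rw [h]
    exact US_indep (id : (Fin 5 → F) → (Fin 5 → F)) (fun _ : F × F => (0 : Fin 5 → F))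
  · -- the main per-Q claims
    intro Q hQ
    have h6 : ∀ Q' : Finset (Fin 4), Q'.card = 2 → Q' = {0,1} ∨ Q' = {0,2} ∨ Q' = {0,3}
        ∨ Q' = {1,2} ∨ Q' = {1,3} ∨ Q' = {2,3} := by decide
    rcases h6 Q hQ with rfl | rfl | rfl | rfl | rfl | rfl
    · -- Q = {0,1}
      have hXQ : Xf F ({0,1} : Finset (Fin 4)) = x01 F := by simp only [Xf]; simp
      refine ⟨⟨x01 F, fun ω => by rw [hXQ]; exact rfl⟩, ?_, ?_⟩
      · intro q hq
        simp only [Finset.mem_insert, Finset.mem_singleton] at hq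
        rw [hXQ]
        rcases hq with rfl | rfl
        · exact Hc_eq_zero (US F) _ _ (fun v => (v.1 0 - ((-1 : F) * v.2.1 + (-1 : F) * v.2.2), v.1 1 - ((-1 : F) * v.2.1)))
            (fun ω => by
              obtain ⟨⟨w1, w2⟩, sv⟩ := ω
              show (w1, w2) = _
              refine Prod.ext ?_ ?_ <;> (simp [x01, Zf]; try ring))
        · exact Hc_eq_zero (US F) _ _ (fun v => (v.1 2 - ((1 : F) * v.2.1 + (1 : F) * v.2.2), v.1 3 - ((1 : F) * v.2.1)))
            (fun ω => by
              obtain ⟨⟨w1, w2⟩, sv⟩ := ω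
              show (w1, w2) = _
              refine Prod.ext ?_ ?_ <;> (simp [x01, Zf]; try ring))
      · intro ev hev
        have hev' : ev = 2 ∨ ev = 3 := by
          fin_cases ev <;> first | (exact absurd (by decide) hev) | (left; rfl) | (right; rfl)
        rw [hXQ]
        rcases hev' with rfl | rfl
        · have hg : (fun ω : (US F).Ω => (x01 F ω, Zf F 2 ω))
              = (fun ω : (US F).Ω => (fun s' : Fin 5 → F => ((![(-1 : F) * s' 0 + (-1 : F) * s' 1, (-1 : F) * s' 0, (1 : F) * s' 2 + (1 : F) * s' 3, (1 : F) * s' 2] : Fin 4 → F), ((s' 4, s' 0 + s' 2) : F × F))) ((fun w : F × F => w.1 • (![(0 : F), (-1 : F), (0 : F), (1 : F), (0 : F)] : Fin 5 → F) + w.2 • (![(-1 : F), (1 : F), (1 : F), (-1 : F), (0 : F)] : Fin 5 → F)) ω.1 + ω.2)) := by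
            funext ω
            obtain ⟨⟨w1, w2⟩, sv⟩ := ω
            refine Prod.ext (funext fun k => ?_) (Prod.ext ?_ ?_)
            · fin_cases k <;> (simp [x01, Zf]; try ring)
            · (simp [x01, Zf]; try ring)
            · (simp [x01, Zf]; try ring)
          rw [hg]
          exact MI_eq_zero (US F) _ _ (US_indep (fun s' : Fin 5 → F => ((![(-1 : F) * s' 0 + (-1 : F) * s' 1, (-1 : F) * s' 0, (1 : F) * s' 2 + (1 : F) * s' 3, (1 : F) * s' 2] : Fin 4 → F), ((s' 4, s' 0 + s' 2) : F × F))) (fun w : F × F => w.1 • (![(0 : F), (-1 : F), (0 : F), (1 : F), (0 : F)] : Fin 5 → F) + w.2 • (![(-1 : F), (1 : F), (1 : F), (-1 : F), (0 : F)] : Fin 5 → F)))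
        · have hg : (fun ω : (US F).Ω => (x01 F ω, Zf F 3 ω))
              = (fun ω : (US F).Ω => (fun s' : Fin 5 → F => ((![(-1 : F) * s' 0 + (-1 : F) * s' 1, (-1 : F) * s' 0, (1 : F) * s' 2 + (1 : F) * s' 3, (1 : F) * s' 2] : Fin 4 → F), ((s' 1 + s' 3, s' 0 + s' 1 + s' 4) : F × F))) ((fun w : F × F => w.1 • (![(0 : F), (-1 : F), (0 : F), (1 : F), (1 : F)] : Fin 5 → F) + w.2 • (![(-1 : F), (1 : F), (1 : F), (-1 : F), (0 : F)] : Fin 5 → F)) ω.1 + ω.2)) := by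
            funext ω
            obtain ⟨⟨w1, w2⟩, sv⟩ := ω
            refine Prod.ext (funext fun k => ?_) (Prod.ext ?_ ?_)
            · fin_cases k <;> (simp [x01, Zf]; try ring)
            · (simp [x01, Zf]; try ring)
            · (simp [x01, Zf]; try ring)
          rw [hg]
          exact MI_eq_zero (US F) _ _ (US_indep (fun s' : Fin 5 → F => ((![(-1 : F) * s' 0 + (-1 : F) * s' 1, (-1 : F) * s' 0, (1 : F) * s' 2 + (1 : F) * s' 3, (1 : F) * s' 2] : Fin 4 → F), ((s' 1 + s' 3, s' 0 + s' 1 + s' 4) : F × F))) (fun w : F × F => w.1 • (![(0 : F), (-1 : F), (0 : F), (1 : F), (1 : F)] : Fin 5 → F) + w.2 • (![(-1 : F), (1 : F), (1 : F), (-1 : F), (0 : F)] : Fin 5 → F)))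
    · -- Q = {0,2}
      have hXQ : Xf F ({0,2} : Finset (Fin 4)) = x02 F := by simp only [Xf]; rw [if_neg (by decide)]; simp
      refine ⟨⟨x02 F, fun ω => by rw [hXQ]; exact rfl⟩, ?_, ?_⟩
      · intro q hq
        simp only [Finset.mem_insert, Finset.mem_singleton] at hq
        rw [hXQ]
        rcases hq with rfl | rfl
        · exact Hc_eq_zero (US F) _ _ (fun v => (v.1 0 - ((-1 : F) * v.2.1 + (-1 : F) * v.2.2), v.1 1 - ((-1 : F) * v.2.1)))
            (fun ω => by
              obtain ⟨⟨w1, w2⟩, sv⟩ := ω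
              show (w1, w2) = _
              refine Prod.ext ?_ ?_ <;> (simp [x02, Zf]; try ring))
        · exact Hc_eq_zero (US F) _ _ (fun v => (v.1 2 - ((1 : F) * v.2.1), v.1 3 - ((-1 : F) * v.2.2)))
            (fun ω => by
              obtain ⟨⟨w1, w2⟩, sv⟩ := ω
              show (w1, w2) = _
              refine Prod.ext ?_ ?_ <;> (simp [x02, Zf]; try ring))
      · intro ev hev
        have hev' : ev = 1 ∨ ev = 3 := by
          fin_cases ev <;> first | (exact absurd (by decide) hev) | (left; rfl) | (right; rfl)
        rw [hXQ]
        rcases hev' with rfl | rfl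
        · have hg : (fun ω : (US F).Ω => (x02 F ω, Zf F 1 ω))
              = (fun ω : (US F).Ω => (fun s' : Fin 5 → F => ((![(-1 : F) * s' 0 + (-1 : F) * s' 1, (-1 : F) * s' 0, (1 : F) * s' 4, (-1 : F) * s' 0 + (-1 : F) * s' 2] : Fin 4 → F), ((s' 2, s' 3) : F × F))) ((fun w : F × F => w.1 • (![(0 : F), (-1 : F), (0 : F), (0 : F), (1 : F)] : Fin 5 → F) + w.2 • (![(-1 : F), (1 : F), (0 : F), (0 : F), (0 : F)] : Fin 5 → F)) ω.1 + ω.2)) := by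
            funext ω
            obtain ⟨⟨w1, w2⟩, sv⟩ := ω
            refine Prod.ext (funext fun k => ?_) (Prod.ext ?_ ?_)
            · fin_cases k <;> (simp [x02, Zf]; try ring)
            · (simp [x02, Zf]; try ring)
            · (simp [x02, Zf]; try ring)
          rw [hg]
          exact MI_eq_zero (US F) _ _ (US_indep (fun s' : Fin 5 → F => ((![(-1 : F) * s' 0 + (-1 : F) * s' 1, (-1 : F) * s' 0, (1 : F) * s' 4, (-1 : F) * s' 0 + (-1 : F) * s' 2] : Fin 4 → F), ((s' 2, s' 3) : F × F))) (fun w : F × F => w.1 • (![(0 : F), (-1 : F), (0 : F), (0 : F), (1 : F)] : Fin 5 → F) + w.2 • (![(-1 : F), (1 : F), (0 : F), (0 : F), (0 : F)] : Fin 5 → F)))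
        · have hg : (fun ω : (US F).Ω => (x02 F ω, Zf F 3 ω))
              = (fun ω : (US F).Ω => (fun s' : Fin 5 → F => ((![(-1 : F) * s' 0 + (-1 : F) * s' 1, (-1 : F) * s' 0, (1 : F) * s' 4, (-1 : F) * s' 0 + (-1 : F) * s' 2] : Fin 4 → F), ((s' 1 + s' 3, s' 0 + s' 1 + s' 4) : F × F))) ((fun w : F × F => w.1 • (![(0 : F), (-1 : F), (0 : F), (1 : F), (1 : F)] : Fin 5 → F) + w.2 • (![(-1 : F), (1 : F), (0 : F), (-1 : F), (0 : F)] : Fin 5 → F)) ω.1 + ω.2)) := by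
            funext ω
            obtain ⟨⟨w1, w2⟩, sv⟩ := ω
            refine Prod.ext (funext fun k => ?_) (Prod.ext ?_ ?_)
            · fin_cases k <;> (simp [x02, Zf]; try ring)
            · (simp [x02, Zf]; try ring)
            · (simp [x02, Zf]; try ring)
          rw [hg]
          exact MI_eq_zero (US F) _ _ (US_indep (fun s' : Fin 5 → F => ((![(-1 : F) * s' 0 + (-1 : F) * s' 1, (-1 : F) * s' 0, (1 : F) * s' 4, (-1 : F) * s' 0 + (-1 : F) * s' 2] : Fin 4 → F), ((s' 1 + s' 3, s' 0 + s' 1 + s' 4) : F × F))) (fun w : F × F => w.1 • (![(0 : F), (-1 : F), (0 : F), (1 : F), (1 : F)] : Fin 5 → F) + w.2 • (![(-1 : F), (1 : F), (0 : F), (-1 : F), (0 : F)] : Fin 5 → F)))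
    · -- Q = {0,3}
      have hXQ : Xf F ({0,3} : Finset (Fin 4)) = x03 F := by simp only [Xf]; rw [if_neg (by decide), if_neg (by decide)]; simp
      refine ⟨⟨x03 F, fun ω => by rw [hXQ]; exact rfl⟩, ?_, ?_⟩
      · intro q hq
        simp only [Finset.mem_insert, Finset.mem_singleton] at hq
        rw [hXQ]
        rcases hq with rfl | rfl
        · exact Hc_eq_zero (US F) _ _ (fun v => (v.1 0 - ((-1 : F) * v.2.1 + (-1 : F) * v.2.2), v.1 1 - ((-1 : F) * v.2.1)))
            (fun ω => by
              obtain ⟨⟨w1, w2⟩, sv⟩ := ω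
              show (w1, w2) = _
              refine Prod.ext ?_ ?_ <;> (simp [x03, Zf]; try ring))
        · exact Hc_eq_zero (US F) _ _ (fun v => (v.1 2 - ((-1 : F) * v.2.2), v.1 3 - ((1 : F) * v.2.1 + (-1 : F) * v.2.2)))
            (fun ω => by
              obtain ⟨⟨w1, w2⟩, sv⟩ := ω
              show (w1, w2) = _
              refine Prod.ext ?_ ?_ <;> (simp [x03, Zf]; try ring))
      · intro ev hev
        have hev' : ev = 1 ∨ ev = 2 := by
          fin_cases ev <;> first | (exact absurd (by decide) hev) | (left; rfl) | (right; rfl)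
        rw [hXQ]
        rcases hev' with rfl | rfl
        · have hg : (fun ω : (US F).Ω => (x03 F ω, Zf F 1 ω))
              = (fun ω : (US F).Ω => (fun s' : Fin 5 → F => ((![(-1 : F) * s' 0 + (-1 : F) * s' 1, (-1 : F) * s' 0, (-1 : F) * s' 0 + (-1 : F) * s' 1 + (-1 : F) * s' 4, (-1 : F) * s' 0 + (1 : F) * s' 3 + (-1 : F) * s' 4] : Fin 4 → F), ((s' 2, s' 3) : F × F))) ((fun w : F × F => w.1 • (![(0 : F), (-1 : F), (0 : F), (0 : F), (0 : F)] : Fin 5 → F) + w.2 • (![(-1 : F), (1 : F), (0 : F), (0 : F), (0 : F)] : Fin 5 → F)) ω.1 + ω.2)) := by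
            funext ω
            obtain ⟨⟨w1, w2⟩, sv⟩ := ω
            refine Prod.ext (funext fun k => ?_) (Prod.ext ?_ ?_)
            · fin_cases k <;> (simp [x03, Zf]; try ring)
            · (simp [x03, Zf]; try ring)
            · (simp [x03, Zf]; try ring)
          rw [hg]
          exact MI_eq_zero (US F) _ _ (US_indep (fun s' : Fin 5 → F => ((![(-1 : F) * s' 0 + (-1 : F) * s' 1, (-1 : F) * s' 0, (-1 : F) * s' 0 + (-1 : F) * s' 1 + (-1 : F) * s' 4, (-1 : F) * s' 0 + (1 : F) * s' 3 + (-1 : F) * s' 4] : Fin 4 → F), ((s' 2, s' 3) : F × F))) (fun w : F × F => w.1 • (![(0 : F), (-1 : F), (0 : F), (0 : F), (0 : F)] : Fin 5 → F) + w.2 • (![(-1 : F), (1 : F), (0 : F), (0 : F), (0 : F)] : Fin 5 → F)))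
        · have hg : (fun ω : (US F).Ω => (x03 F ω, Zf F 2 ω))
              = (fun ω : (US F).Ω => (fun s' : Fin 5 → F => ((![(-1 : F) * s' 0 + (-1 : F) * s' 1, (-1 : F) * s' 0, (-1 : F) * s' 0 + (-1 : F) * s' 1 + (-1 : F) * s' 4, (-1 : F) * s' 0 + (1 : F) * s' 3 + (-1 : F) * s' 4] : Fin 4 → F), ((s' 4, s' 0 + s' 2) : F × F))) ((fun w : F × F => w.1 • (![(0 : F), (-1 : F), (0 : F), (0 : F), (0 : F)] : Fin 5 → F) + w.2 • (![(-1 : F), (1 : F), (1 : F), (0 : F), (0 : F)] : Fin 5 → F)) ω.1 + ω.2)) := by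
            funext ω
            obtain ⟨⟨w1, w2⟩, sv⟩ := ω
            refine Prod.ext (funext fun k => ?_) (Prod.ext ?_ ?_)
            · fin_cases k <;> (simp [x03, Zf]; try ring)
            · (simp [x03, Zf]; try ring)
            · (simp [x03, Zf]; try ring)
          rw [hg]
          exact MI_eq_zero (US F) _ _ (US_indep (fun s' : Fin 5 → F => ((![(-1 : F) * s' 0 + (-1 : F) * s' 1, (-1 : F) * s' 0, (-1 : F) * s' 0 + (-1 : F) * s' 1 + (-1 : F) * s' 4, (-1 : F) * s' 0 + (1 : F) * s' 3 + (-1 : F) * s' 4] : Fin 4 → F), ((s' 4, s' 0 + s' 2) : F × F))) (fun w : F × F => w.1 • (![(0 : F), (-1 : F), (0 : F), (0 : F), (0 : F)] : Fin 5 → F) + w.2 • (![(-1 : F), (1 : F), (1 : F), (0 : F), (0 : F)] : Fin 5 → F)))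
    · -- Q = {1,2}
      have hXQ : Xf F ({1,2} : Finset (Fin 4)) = x12 F := by simp only [Xf]; rw [if_neg (by decide), if_neg (by decide), if_neg (by decide)]; simp
      refine ⟨⟨x12 F, fun ω => by rw [hXQ]; exact rfl⟩, ?_, ?_⟩
      · intro q hq
        simp only [Finset.mem_insert, Finset.mem_singleton] at hq
        rw [hXQ]
        rcases hq with rfl | rfl
        · exact Hc_eq_zero (US F) _ _ (fun v => (v.1 0 - ((-1 : F) * v.2.1 + (-1 : F) * v.2.2), v.1 1 - ((-1 : F) * v.2.1)))
            (fun ω => by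
              obtain ⟨⟨w1, w2⟩, sv⟩ := ω
              show (w1, w2) = _
              refine Prod.ext ?_ ?_ <;> (simp [x12, Zf]; try ring))
        · exact Hc_eq_zero (US F) _ _ (fun v => (v.1 2 - ((-1 : F) * v.2.1 + (-1 : F) * v.2.2), v.1 3 - ((-1 : F) * v.2.2)))
            (fun ω => by
              obtain ⟨⟨w1, w2⟩, sv⟩ := ω
              show (w1, w2) = _
              refine Prod.ext ?_ ?_ <;> (simp [x12, Zf]; try ring))
      · intro ev hev
        have hev' : ev = 0 ∨ ev = 3 := by
          fin_cases ev <;> first | (exact absurd (by decide) hev) | (left; rfl) | (right; rfl)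
        rw [hXQ]
        rcases hev' with rfl | rfl
        · have hg : (fun ω : (US F).Ω => (x12 F ω, Zf F 0 ω))
              = (fun ω : (US F).Ω => (fun s' : Fin 5 → F => ((![(-1 : F) * s' 2 + (-1 : F) * s' 3, (-1 : F) * s' 2, (-1 : F) * s' 0 + (-1 : F) * s' 2 + (-1 : F) * s' 4, (-1 : F) * s' 0 + (-1 : F) * s' 2] : Fin 4 → F), ((s' 0, s' 1) : F × F))) ((fun w : F × F => w.1 • (![(0 : F), (0 : F), (0 : F), (-1 : F), (-1 : F)] : Fin 5 → F) + w.2 • (![(0 : F), (0 : F), (-1 : F), (1 : F), (1 : F)] : Fin 5 → F)) ω.1 + ω.2)) := by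
            funext ω
            obtain ⟨⟨w1, w2⟩, sv⟩ := ω
            refine Prod.ext (funext fun k => ?_) (Prod.ext ?_ ?_)
            · fin_cases k <;> (simp [x12, Zf]; try ring)
            · (simp [x12, Zf]; try ring)
            · (simp [x12, Zf]; try ring)
          rw [hg]
          exact MI_eq_zero (US F) _ _ (US_indep (fun s' : Fin 5 → F => ((![(-1 : F) * s' 2 + (-1 : F) * s' 3, (-1 : F) * s' 2, (-1 : F) * s' 0 + (-1 : F) * s' 2 + (-1 : F) * s' 4, (-1 : F) * s' 0 + (-1 : F) * s' 2] : Fin 4 → F), ((s' 0, s' 1) : F × F))) (fun w : F × F => w.1 • (![(0 : F), (0 : F), (0 : F), (-1 : F), (-1 : F)] : Fin 5 → F) + w.2 • (![(0 : F), (0 : F), (-1 : F), (1 : F), (1 : F)] : Fin 5 → F)))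
        · have hg : (fun ω : (US F).Ω => (x12 F ω, Zf F 3 ω))
              = (fun ω : (US F).Ω => (fun s' : Fin 5 → F => ((![(-1 : F) * s' 2 + (-1 : F) * s' 3, (-1 : F) * s' 2, (-1 : F) * s' 0 + (-1 : F) * s' 2 + (-1 : F) * s' 4, (-1 : F) * s' 0 + (-1 : F) * s' 2] : Fin 4 → F), ((s' 1 + s' 3, s' 0 + s' 1 + s' 4) : F × F))) ((fun w : F × F => w.1 • (![(0 : F), (1 : F), (0 : F), (-1 : F), (-1 : F)] : Fin 5 → F) + w.2 • (![(0 : F), (-1 : F), (-1 : F), (1 : F), (1 : F)] : Fin 5 → F)) ω.1 + ω.2)) := by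
            funext ω
            obtain ⟨⟨w1, w2⟩, sv⟩ := ω
            refine Prod.ext (funext fun k => ?_) (Prod.ext ?_ ?_)
            · fin_cases k <;> (simp [x12, Zf]; try ring)
            · (simp [x12, Zf]; try ring)
            · (simp [x12, Zf]; try ring)
          rw [hg]
          exact MI_eq_zero (US F) _ _ (US_indep (fun s' : Fin 5 → F => ((![(-1 : F) * s' 2 + (-1 : F) * s' 3, (-1 : F) * s' 2, (-1 : F) * s' 0 + (-1 : F) * s' 2 + (-1 : F) * s' 4, (-1 : F) * s' 0 + (-1 : F) * s' 2] : Fin 4 → F), ((s' 1 + s' 3, s' 0 + s' 1 + s' 4) : F × F))) (fun w : F × F => w.1 • (![(0 : F), (1 : F), (0 : F), (-1 : F), (-1 : F)] : Fin 5 → F) + w.2 • (![(0 : F), (-1 : F), (-1 : F), (1 : F), (1 : F)] : Fin 5 → F)))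
    · -- Q = {1,3}
      have hXQ : Xf F ({1,3} : Finset (Fin 4)) = x13 F := by simp only [Xf]; rw [if_neg (by decide), if_neg (by decide), if_neg (by decide), if_neg (by decide)]; simp
      refine ⟨⟨x13 F, fun ω => by rw [hXQ]; exact rfl⟩, ?_, ?_⟩
      · intro q hq
        simp only [Finset.mem_insert, Finset.mem_singleton] at hq
        rw [hXQ]
        rcases hq with rfl | rfl
        · exact Hc_eq_zero (US F) _ _ (fun v => (v.1 0 - ((-1 : F) * v.2.1 + (-1 : F) * v.2.2), v.1 1 - ((-1 : F) * v.2.1)))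
            (fun ω => by
              obtain ⟨⟨w1, w2⟩, sv⟩ := ω
              show (w1, w2) = _
              refine Prod.ext ?_ ?_ <;> (simp [x13, Zf]; try ring))
        · exact Hc_eq_zero (US F) _ _ (fun v => (v.1 2 - ((-1 : F) * v.2.1 + (1 : F) * v.2.2), v.1 3 - ((1 : F) * v.2.2)))
            (fun ω => by
              obtain ⟨⟨w1, w2⟩, sv⟩ := ω
              show (w1, w2) = _
              refine Prod.ext ?_ ?_ <;> (simp [x13, Zf]; try ring))
      · intro ev hev
        have hev' : ev = 0 ∨ ev = 2 := by
          fin_cases ev <;> first | (exact absurd (by decide) hev) | (left; rfl) | (right; rfl)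
        rw [hXQ]
        rcases hev' with rfl | rfl
        · have hg : (fun ω : (US F).Ω => (x13 F ω, Zf F 0 ω))
              = (fun ω : (US F).Ω => (fun s' : Fin 5 → F => ((![(-1 : F) * s' 2 + (-1 : F) * s' 3, (-1 : F) * s' 2, (1 : F) * s' 0 + (-1 : F) * s' 3 + (1 : F) * s' 4, (1 : F) * s' 0 + (1 : F) * s' 1 + (1 : F) * s' 4] : Fin 4 → F), ((s' 0, s' 1) : F × F))) ((fun w : F × F => w.1 • (![(0 : F), (0 : F), (0 : F), (-1 : F), (0 : F)] : Fin 5 → F) + w.2 • (![(0 : F), (0 : F), (-1 : F), (1 : F), (1 : F)] : Fin 5 → F)) ω.1 + ω.2)) := by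
            funext ω
            obtain ⟨⟨w1, w2⟩, sv⟩ := ω
            refine Prod.ext (funext fun k => ?_) (Prod.ext ?_ ?_)
            · fin_cases k <;> (simp [x13, Zf]; try ring)
            · (simp [x13, Zf]; try ring)
            · (simp [x13, Zf]; try ring)
          rw [hg]
          exact MI_eq_zero (US F) _ _ (US_indep (fun s' : Fin 5 → F => ((![(-1 : F) * s' 2 + (-1 : F) * s' 3, (-1 : F) * s' 2, (1 : F) * s' 0 + (-1 : F) * s' 3 + (1 : F) * s' 4, (1 : F) * s' 0 + (1 : F) * s' 1 + (1 : F) * s' 4] : Fin 4 → F), ((s' 0, s' 1) : F × F))) (fun w : F × F => w.1 • (![(0 : F), (0 : F), (0 : F), (-1 : F), (0 : F)] : Fin 5 → F) + w.2 • (![(0 : F), (0 : F), (-1 : F), (1 : F), (1 : F)] : Fin 5 → F)))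
        · have hg : (fun ω : (US F).Ω => (x13 F ω, Zf F 2 ω))
              = (fun ω : (US F).Ω => (fun s' : Fin 5 → F => ((![(-1 : F) * s' 2 + (-1 : F) * s' 3, (-1 : F) * s' 2, (1 : F) * s' 0 + (-1 : F) * s' 3 + (1 : F) * s' 4, (1 : F) * s' 0 + (1 : F) * s' 1 + (1 : F) * s' 4] : Fin 4 → F), ((s' 4, s' 0 + s' 2) : F × F))) ((fun w : F × F => w.1 • (![(0 : F), (0 : F), (0 : F), (-1 : F), (0 : F)] : Fin 5 → F) + w.2 • (![(1 : F), (0 : F), (-1 : F), (1 : F), (0 : F)] : Fin 5 → F)) ω.1 + ω.2)) := by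
            funext ω
            obtain ⟨⟨w1, w2⟩, sv⟩ := ω
            refine Prod.ext (funext fun k => ?_) (Prod.ext ?_ ?_)
            · fin_cases k <;> (simp [x13, Zf]; try ring)
            · (simp [x13, Zf]; try ring)
            · (simp [x13, Zf]; try ring)
          rw [hg]
          exact MI_eq_zero (US F) _ _ (US_indep (fun s' : Fin 5 → F => ((![(-1 : F) * s' 2 + (-1 : F) * s' 3, (-1 : F) * s' 2, (1 : F) * s' 0 + (-1 : F) * s' 3 + (1 : F) * s' 4, (1 : F) * s' 0 + (1 : F) * s' 1 + (1 : F) * s' 4] : Fin 4 → F), ((s' 4, s' 0 + s' 2) : F × F))) (fun w : F × F => w.1 • (![(0 : F), (0 : F), (0 : F), (-1 : F), (0 : F)] : Fin 5 → F) + w.2 • (![(1 : F), (0 : F), (-1 : F), (1 : F), (0 : F)] : Fin 5 → F)))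
    · -- Q = {2,3}
      have hXQ : Xf F ({2,3} : Finset (Fin 4)) = x23 F := by simp only [Xf]; rw [if_neg (by decide), if_neg (by decide), if_neg (by decide), if_neg (by decide), if_neg (by decide)]
      refine ⟨⟨x23 F, fun ω => by rw [hXQ]; exact rfl⟩, ?_, ?_⟩
      · intro q hq
        simp only [Finset.mem_insert, Finset.mem_singleton] at hq
        rw [hXQ]
        rcases hq with rfl | rfl
        · exact Hc_eq_zero (US F) _ _ (fun v => (v.1 0 - ((-1 : F) * v.2.1 + (-1 : F) * v.2.2), v.1 1 - ((-1 : F) * v.2.1)))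
            (fun ω => by
              obtain ⟨⟨w1, w2⟩, sv⟩ := ω
              show (w1, w2) = _
              refine Prod.ext ?_ ?_ <;> (simp [x23, Zf]; try ring))
        · exact Hc_eq_zero (US F) _ _ (fun v => (v.1 2 - ((1 : F) * v.2.1 + (-1 : F) * v.2.2), v.1 3 - ((-1 : F) * v.2.2)))
            (fun ω => by
              obtain ⟨⟨w1, w2⟩, sv⟩ := ω
              show (w1, w2) = _
              refine Prod.ext ?_ ?_ <;> (simp [x23, Zf]; try ring))
      · intro ev hev
        have hev' : ev = 0 ∨ ev = 1 := by
          fin_cases ev <;> first | (exact absurd (by decide) hev) | (left; rfl) | (right; rfl)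
        rw [hXQ]
        rcases hev' with rfl | rfl
        · have hg : (fun ω : (US F).Ω => (x23 F ω, Zf F 0 ω))
              = (fun ω : (US F).Ω => (fun s' : Fin 5 → F => ((![(-1 : F) * s' 0 + (-1 : F) * s' 2 + (-1 : F) * s' 4, (-1 : F) * s' 4, (-1 : F) * s' 0 + (1 : F) * s' 3 + (-1 : F) * s' 4, (-1 : F) * s' 0 + (-1 : F) * s' 1 + (-1 : F) * s' 4] : Fin 4 → F), ((s' 0, s' 1) : F × F))) ((fun w : F × F => w.1 • (![(0 : F), (0 : F), (-1 : F), (1 : F), (0 : F)] : Fin 5 → F) + w.2 • (![(0 : F), (0 : F), (1 : F), (-1 : F), (-1 : F)] : Fin 5 → F)) ω.1 + ω.2)) := by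
            funext ω
            obtain ⟨⟨w1, w2⟩, sv⟩ := ω
            refine Prod.ext (funext fun k => ?_) (Prod.ext ?_ ?_)
            · fin_cases k <;> (simp [x23, Zf]; try ring)
            · (simp [x23, Zf]; try ring)
            · (simp [x23, Zf]; try ring)
          rw [hg]
          exact MI_eq_zero (US F) _ _ (US_indep (fun s' : Fin 5 → F => ((![(-1 : F) * s' 0 + (-1 : F) * s' 2 + (-1 : F) * s' 4, (-1 : F) * s' 4, (-1 : F) * s' 0 + (1 : F) * s' 3 + (-1 : F) * s' 4, (-1 : F) * s' 0 + (-1 : F) * s' 1 + (-1 : F) * s' 4] : Fin 4 → F), ((s' 0, s' 1) : F × F))) (fun w : F × F => w.1 • (![(0 : F), (0 : F), (-1 : F), (1 : F), (0 : F)] : Fin 5 → F) + w.2 • (![(0 : F), (0 : F), (1 : F), (-1 : F), (-1 : F)] : Fin 5 → F)))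
        · have hg : (fun ω : (US F).Ω => (x23 F ω, Zf F 1 ω))
              = (fun ω : (US F).Ω => (fun s' : Fin 5 → F => ((![(-1 : F) * s' 0 + (-1 : F) * s' 2 + (-1 : F) * s' 4, (-1 : F) * s' 4, (-1 : F) * s' 0 + (1 : F) * s' 3 + (-1 : F) * s' 4, (-1 : F) * s' 0 + (-1 : F) * s' 1 + (-1 : F) * s' 4] : Fin 4 → F), ((s' 2, s' 3) : F × F))) ((fun w : F × F => w.1 • (![(-1 : F), (1 : F), (0 : F), (0 : F), (0 : F)] : Fin 5 → F) + w.2 • (![(1 : F), (-1 : F), (0 : F), (0 : F), (-1 : F)] : Fin 5 → F)) ω.1 + ω.2)) := by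
            funext ω
            obtain ⟨⟨w1, w2⟩, sv⟩ := ω
            refine Prod.ext (funext fun k => ?_) (Prod.ext ?_ ?_)
            · fin_cases k <;> (simp [x23, Zf]; try ring)
            · (simp [x23, Zf]; try ring)
            · (simp [x23, Zf]; try ring)
          rw [hg]
          exact MI_eq_zero (US F) _ _ (US_indep (fun s' : Fin 5 → F => ((![(-1 : F) * s' 0 + (-1 : F) * s' 2 + (-1 : F) * s' 4, (-1 : F) * s' 4, (-1 : F) * s' 0 + (1 : F) * s' 3 + (-1 : F) * s' 4, (-1 : F) * s' 0 + (-1 : F) * s' 1 + (-1 : F) * s' 4] : Fin 4 → F), ((s' 2, s' 3) : F × F))) (fun w : F × F => w.1 • (![(-1 : F), (1 : F), (0 : F), (0 : F), (0 : F)] : Fin 5 → F) + w.2 • (![(1 : F), (-1 : F), (0 : F), (0 : F), (-1 : F)] : Fin 5 → F)))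
  · -- H W
    have h := US_H_of_equiv (Equiv.refl (Om F)) (Prod.fst : Om F → F × F) (fun ω => rfl)
    rw [show ((US F).H (Prod.fst : Om F → F × F) = 2 * Real.log (Fintype.card F))
      from h.trans (log_card_FF F)]
  · -- H Z k
    intro k
    fin_cases k
    · show (US F).H (Zf F 0) = _
      exact (US_H_of_equiv (eZ0 F) (Zf F 0) (fun ω => rfl)).trans (log_card_FF F)
    · show (US F).H (Zf F 1) = _
      exact (US_H_of_equiv (eZ1 F) (Zf F 1) (fun ω => rfl)).trans (log_card_FF F)
    · show (US F).H (Zf F 2) = _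
      exact (US_H_of_equiv (eZ2 F) (Zf F 2) (fun ω => rfl)).trans (log_card_FF F)
    · show (US F).H (Zf F 3) = _
      exact (US_H_of_equiv (eZ3 F) (Zf F 3) (fun ω => rfl)).trans (log_card_FF F)
  · -- H X Q ≤ 4 log
    intro Q hQ
    have h6 : ∀ Q' : Finset (Fin 4), Q'.card = 2 → Q' = {0,1} ∨ Q' = {0,2} ∨ Q' = {0,3}
        ∨ Q' = {1,2} ∨ Q' = {1,3} ∨ Q' = {2,3} := by decide
    rcases h6 Q hQ with rfl | rfl | rfl | rfl | rfl | rfl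
    · have hXQ : Xf F ({0,1} : Finset (Fin 4)) = x01 F := by simp only [Xf]; simp
      rw [hXQ]
      exact le_of_eq ((US_H_of_equiv (eX01 F) (x01 F) (fun ω => rfl)).trans (log_card_fun4 F))
    · have hXQ : Xf F ({0,2} : Finset (Fin 4)) = x02 F := by simp only [Xf]; rw [if_neg (by decide)]; simp
      rw [hXQ]
      exact le_of_eq ((US_H_of_equiv (eX02 F) (x02 F) (fun ω => rfl)).trans (log_card_fun4 F))
    · have hXQ : Xf F ({0,3} : Finset (Fin 4)) = x03 F := by simp only [Xf]; rw [if_neg (by decide), if_neg (by decide)]; simp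
      rw [hXQ]
      exact le_of_eq ((US_H_of_equiv (eX03 F) (x03 F) (fun ω => rfl)).trans (log_card_fun4 F))
    · have hXQ : Xf F ({1,2} : Finset (Fin 4)) = x12 F := by simp only [Xf]; rw [if_neg (by decide), if_neg (by decide), if_neg (by decide)]; simp
      rw [hXQ]
      exact le_of_eq ((US_H_of_equiv (eX12 F) (x12 F) (fun ω => rfl)).trans (log_card_fun4 F))
    · have hXQ : Xf F ({1,3} : Finset (Fin 4)) = x13 F := by simp only [Xf]; rw [if_neg (by decide), if_neg (by decide), if_neg (by decide), if_neg (by decide)]; simp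
      rw [hXQ]
      exact le_of_eq ((US_H_of_equiv (eX13 F) (x13 F) (fun ω => rfl)).trans (log_card_fun4 F))
    · have hXQ : Xf F ({2,3} : Finset (Fin 4)) = x23 F := by simp only [Xf]; rw [if_neg (by decide), if_neg (by decide), if_neg (by decide), if_neg (by decide), if_neg (by decide)]
      rw [hXQ]
      exact le_of_eq ((US_H_of_equiv (eX23 F) (x23 F) (fun ω => rfl)).trans (log_card_fun4 F))
  · -- joint key entropy
    have hfun : (fun ω : (US F).Ω => fun k : Fin 4 => Zf F k ω)
        = (fun ω : (US F).Ω => gz F (fun i : Fin 5 => ω.2 i)) := by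
      funext ω
      funext k
      fin_cases k <;> rfl
    rw [hfun]
    have h1 := H_comp_inj (US F) (fun ω : Om F => fun i : Fin 5 => ω.2 i) (gz F) (gz_inj F)
    have h2 : (US F).H (fun ω : Om F => fun i : Fin 5 => ω.2 i)
        = 5 * Real.log (Fintype.card F) :=
      (US_H_of_equiv (Equiv.prodComm (F × F) (Fin 5 → F))
        (fun ω : Om F => fun i : Fin 5 => ω.2 i) (fun ω => rfl)).trans (log_card_fun5 F)
    exact h1.trans h2
end
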